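/- arXiv:2604.26502 — 4 statements merged into one kernel-verified Lean document; each statement's English description precedes it below -/
import Mathlib

section
/- Let n ≥ 1 and I ⊆ [n-1]. Then ASM^I(n) is the Dedekind–MacNeille completion of the Bruhat order on S_n^I. Concretely: (i) every A ∈ ASM^I(n) equals the join, in the lattice ASM^I(n), of the permutation matrices of the elements w ∈ S_n^I whose permutation matrix is ≤ A in the Bruhat order; and (ii) every A ∈ ASM^I(n) equals the meet, in the lattice ASM^I(n), of the permutation matrices of the elements w ∈ S_n^I whose permutation matrix is ≥ A in the Bruhat order. In particular the set of permutation matrices of elements of S_n^I is join-dense and meet-dense in ASM^I(n). -/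
set_option linter.unusedSectionVars false
set_option linter.unusedVariables false
set_option linter.unnecessarySeqFocus false


/-- The rank (corner sum) matrix entry `r_A(i,j)` (1-based `i j`, zero when `i = 0` or `j = 0`). -/
def rk (n : ℕ) (A : Matrix (Fin n) (Fin n) ℤ) (i j : ℕ) : ℤ :=
  ∑ p : Fin n, ∑ q : Fin n, if p.1 < i ∧ q.1 < j then A p q else 0

/-- `A` is an alternating sign matrix: entries in `{-1,0,1}`, the nonzero entries of each row
and column alternate in sign and sum to `1`; equivalently all partial row and column sums are
`0` or `1` and every full row and column sums to `1`. -/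
def IsASM (n : ℕ) (A : Matrix (Fin n) (Fin n) ℤ) : Prop :=
  (∀ i j, A i j = -1 ∨ A i j = 0 ∨ A i j = 1) ∧
  (∀ i : Fin n, ∀ j : ℕ, j ≤ n →
      (∑ q : Fin n, if q.1 < j then A i q else 0) = 0 ∨
      (∑ q : Fin n, if q.1 < j then A i q else 0) = 1) ∧
  (∀ j : Fin n, ∀ i : ℕ, i ≤ n →
      (∑ p : Fin n, if p.1 < i then A p j else 0) = 0 ∨
      (∑ p : Fin n, if p.1 < i then A p j else 0) = 1) ∧
  (∀ i : Fin n, (∑ q : Fin n, A i q) = 1) ∧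
  (∀ j : Fin n, (∑ p : Fin n, A p j) = 1)

/-- `A ∈ ASM^I(n)`: `A` is an ASM and for every `i ∈ I` and `j ∈ [n]`,
`r_A(i,j) = r_A(i-1,j) + 1` or `r_A(i,j) = r_A(i+1,j)`. -/
def InASMI (n : ℕ) (I : Finset ℕ) (A : Matrix (Fin n) (Fin n) ℤ) : Prop :=
  IsASM n A ∧ ∀ i ∈ I, ∀ j, 1 ≤ j → j ≤ n →
    rk n A i j = rk n A (i - 1) j + 1 ∨ rk n A i j = rk n A (i + 1) j

/-- Bruhat order on `ASM(n)`: `A ≤ B` iff `r_A(i,j) ≥ r_B(i,j)` for all `i,j ∈ [n]`. -/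
def blE (n : ℕ) (A B : Matrix (Fin n) (Fin n) ℤ) : Prop :=
  ∀ i j, 1 ≤ i → i ≤ n → 1 ≤ j → j ≤ n → rk n B i j ≤ rk n A i j

/-- Permutation matrix of `w`. -/
def permMatrix (n : ℕ) (w : Equiv.Perm (Fin n)) : Matrix (Fin n) (Fin n) ℤ :=
  Matrix.of fun i j => if w i = j then 1 else 0

/-- `w ∈ S_n^I`: `w(i) < w(i+1)` for all `i ∈ I` (indices 1-based). -/
def IsMinRep (n : ℕ) (I : Finset ℕ) (w : Equiv.Perm (Fin n)) : Prop :=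
  ∀ p q : Fin n, (p.1 + 1) ∈ I → q.1 = p.1 + 1 → w p < w q

/-- Identity matrix. -/
def idMat (n : ℕ) : Matrix (Fin n) (Fin n) ℤ :=
  Matrix.of fun i j => if i = j then 1 else 0

namespace ASMAux

open Finset

/-- generic sum-cut helper -/
lemma sum_if_succ {n : ℕ} (g : Fin n → ℤ) (i : ℕ) (h : i < n) :
    (∑ p : Fin n, if p.1 < i + 1 then g p else 0)
      = (∑ p : Fin n, if p.1 < i then g p else 0) + g ⟨i, h⟩ := by
  have key : ∀ p : Fin n, (if p.1 < i + 1 then g p else 0)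
      = (if p.1 < i then g p else 0) + (if p = ⟨i, h⟩ then g p else 0) := by
    intro p
    by_cases hp : p = ⟨i, h⟩
    · subst hp; simp
    · have hpi : p.1 ≠ i := fun hc => hp (Fin.ext hc)
      by_cases h1 : p.1 < i
      · simp [h1, Nat.lt_succ_of_lt h1, hp]
      · have h2 : ¬ p.1 < i + 1 := by omega
        simp [h1, h2, hp]
  rw [Finset.sum_congr rfl (fun p _ => key p), Finset.sum_add_distrib,
    Finset.sum_ite_eq' Finset.univ (⟨i, h⟩ : Fin n) g]
  simp

lemma sum_if_of_ge {n : ℕ} (g : Fin n → ℤ) (i : ℕ) (h : n ≤ i) :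
    (∑ p : Fin n, if p.1 < i then g p else 0) = ∑ p : Fin n, g p := by
  refine Finset.sum_congr rfl fun p _ => ?_
  have : p.1 < i := lt_of_lt_of_le p.2 h
  simp [this]

lemma rk_eq_row {n : ℕ} (A : Matrix (Fin n) (Fin n) ℤ) (i j : ℕ) :
    rk n A i j = ∑ p : Fin n, (if p.1 < i then (∑ q : Fin n, if q.1 < j then A p q else 0) else 0) := by
  unfold rk
  refine Finset.sum_congr rfl fun p _ => ?_
  by_cases h : p.1 < i
  · simp only [h, if_true, true_and]
  · simp [h]

lemma rk_eq_col {n : ℕ} (A : Matrix (Fin n) (Fin n) ℤ) (i j : ℕ) :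
    rk n A i j = ∑ q : Fin n, (if q.1 < j then (∑ p : Fin n, if p.1 < i then A p q else 0) else 0) := by
  unfold rk
  rw [Finset.sum_comm]
  refine Finset.sum_congr rfl fun q _ => ?_
  by_cases h : q.1 < j
  · simp only [h, if_true, and_true]
  · simp [h]

lemma rk_zero_row {n : ℕ} (A : Matrix (Fin n) (Fin n) ℤ) (j : ℕ) : rk n A 0 j = 0 := by
  rw [rk_eq_row]; simp

lemma rk_zero_col {n : ℕ} (A : Matrix (Fin n) (Fin n) ℤ) (i : ℕ) : rk n A i 0 = 0 := by
  rw [rk_eq_col]; simp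

lemma rk_succ_row {n : ℕ} (A : Matrix (Fin n) (Fin n) ℤ) (i j : ℕ) (h : i < n) :
    rk n A (i + 1) j = rk n A i j + (∑ q : Fin n, if q.1 < j then A ⟨i, h⟩ q else 0) := by
  rw [rk_eq_row, rk_eq_row, sum_if_succ (fun p => ∑ q : Fin n, if q.1 < j then A p q else 0) i h]

lemma rk_succ_col {n : ℕ} (A : Matrix (Fin n) (Fin n) ℤ) (i j : ℕ) (h : j < n) :
    rk n A i (j + 1) = rk n A i j + (∑ p : Fin n, if p.1 < i then A p ⟨j, h⟩ else 0) := by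
  rw [rk_eq_col, rk_eq_col, sum_if_succ (fun q => ∑ p : Fin n, if p.1 < i then A p q else 0) j h]

lemma rk_stab_row {n : ℕ} (A : Matrix (Fin n) (Fin n) ℤ) (i j : ℕ) (h : n ≤ i) :
    rk n A i j = rk n A n j := by
  rw [rk_eq_row, rk_eq_row, sum_if_of_ge _ i h, sum_if_of_ge _ n le_rfl]

section withASM

variable {n : ℕ} {A : Matrix (Fin n) (Fin n) ℤ} (hA : IsASM n A)

include hA

lemma rk_row_step (i j : ℕ) (hi : i < n) (hj : j ≤ n) :
    rk n A i j ≤ rk n A (i+1) j ∧ rk n A (i+1) j ≤ rk n A i j + 1 := by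
  rw [rk_succ_row A i j hi]
  rcases hA.2.1 ⟨i, hi⟩ j hj with h | h <;> rw [h] <;> omega

lemma rk_col_step (i j : ℕ) (hj : j < n) (hi : i ≤ n) :
    rk n A i j ≤ rk n A i (j+1) ∧ rk n A i (j+1) ≤ rk n A i j + 1 := by
  rw [rk_succ_col A i j hj]
  rcases hA.2.2.1 ⟨j, hj⟩ i hi with h | h <;> rw [h] <;> omega

lemma rk_mono_row {i i' j : ℕ} (hii : i ≤ i') (hi' : i' ≤ n) (hj : j ≤ n) :
    rk n A i j ≤ rk n A i' j := by
  induction i', hii using Nat.le_induction with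
  | base => exact le_rfl
  | succ m hm ih =>
    have h1 : m < n := by omega
    exact le_trans (ih (by omega)) (rk_row_step hA m j h1 hj).1

lemma rk_lip_row {i i' j : ℕ} (hii : i ≤ i') (hi' : i' ≤ n) (hj : j ≤ n) :
    rk n A i' j ≤ rk n A i j + (i' - i : ℕ) := by
  induction i', hii using Nat.le_induction with
  | base => simp
  | succ m hm ih =>
    have h1 : m < n := by omega
    have h2 := (rk_row_step hA m j h1 hj).2
    have h3 := ih (by omega)
    have : ((m + 1 - i : ℕ) : ℤ) = ((m - i : ℕ) : ℤ) + 1 := by omega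
    omega

lemma rk_mono_col {i j j' : ℕ} (hjj : j ≤ j') (hj' : j' ≤ n) (hi : i ≤ n) :
    rk n A i j ≤ rk n A i j' := by
  induction j', hjj using Nat.le_induction with
  | base => exact le_rfl
  | succ m hm ih =>
    have h1 : m < n := by omega
    exact le_trans (ih (by omega)) (rk_col_step hA i m h1 hi).1

lemma rk_lip_col {i j j' : ℕ} (hjj : j ≤ j') (hj' : j' ≤ n) (hi : i ≤ n) :
    rk n A i j' ≤ rk n A i j + (j' - j : ℕ) := by
  induction j', hjj using Nat.le_induction with
  | base => simp
  | succ m hm ih =>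
    have h1 : m < n := by omega
    have h2 := (rk_col_step hA i m h1 hi).2
    have h3 := ih (by omega)
    have : ((m + 1 - j : ℕ) : ℤ) = ((m - j : ℕ) : ℤ) + 1 := by omega
    omega

lemma rk_row_full (i : ℕ) (hi : i ≤ n) : rk n A i n = (i : ℤ) := by
  induction i with
  | zero => simpa using rk_zero_row A n
  | succ m ih =>
    have h1 : m < n := by omega
    rw [rk_succ_row A m n h1]
    have : (∑ q : Fin n, if q.1 < n then A ⟨m, h1⟩ q else 0) = 1 := by
      rw [show (∑ q : Fin n, if q.1 < n then A ⟨m, h1⟩ q else 0) = ∑ q : Fin n, A ⟨m, h1⟩ q from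
        Finset.sum_congr rfl fun q _ => by simp [q.2]]
      exact hA.2.2.2.1 ⟨m, h1⟩
    rw [this, ih (by omega)]
    push_cast; ring

lemma rk_col_full (j : ℕ) (hj : j ≤ n) : rk n A n j = (j : ℤ) := by
  induction j with
  | zero => simpa using rk_zero_col A n
  | succ m ih =>
    have h1 : m < n := by omega
    rw [rk_succ_col A n m h1]
    have : (∑ p : Fin n, if p.1 < n then A p ⟨m, h1⟩ else 0) = 1 := by
      rw [show (∑ p : Fin n, if p.1 < n then A p ⟨m, h1⟩ else 0) = ∑ p : Fin n, A p ⟨m, h1⟩ from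
        Finset.sum_congr rfl fun p _ => by simp [p.2]]
      exact hA.2.2.2.2 ⟨m, h1⟩
    rw [this, ih (by omega)]
    push_cast; ring

lemma rk_nonneg {i j : ℕ} (hi : i ≤ n) (hj : j ≤ n) : 0 ≤ rk n A i j := by
  have := rk_mono_row hA (Nat.zero_le i) hi hj
  rwa [rk_zero_row] at this

lemma rk_le_i {i j : ℕ} (hi : i ≤ n) (hj : j ≤ n) : rk n A i j ≤ (i : ℤ) := by
  have := rk_mono_col hA hj le_rfl hi
  rwa [rk_row_full hA i hi] at this

lemma rk_le_j {i j : ℕ} (hi : i ≤ n) (hj : j ≤ n) : rk n A i j ≤ (j : ℤ) := by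
  have := rk_mono_row hA hi le_rfl hj
  rwa [rk_col_full hA j hj] at this

lemma rk_ge_sub {i j : ℕ} (hi : i ≤ n) (hj : j ≤ n) : (i : ℤ) + j - n ≤ rk n A i j := by
  have := rk_lip_col hA hj le_rfl hi
  rw [rk_row_full hA i hi] at this
  omega

end withASM


def cnt {n : ℕ} (w : Equiv.Perm (Fin n)) (i j : ℕ) : ℤ :=
  ∑ p : Fin n, if p.1 < i ∧ (w p).1 < j then 1 else 0

variable {n : ℕ}

lemma rk_permMatrix (w : Equiv.Perm (Fin n)) (i j : ℕ) :
    rk n (permMatrix n w) i j = cnt w i j := by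
  unfold rk cnt permMatrix
  refine Finset.sum_congr rfl fun p _ => ?_
  have key : ∀ q : Fin n, (if p.1 < i ∧ q.1 < j then (Matrix.of fun a b => if w a = b then (1:ℤ) else 0) p q else 0)
      = if q = w p then (if p.1 < i ∧ q.1 < j then 1 else 0) else 0 := by
    intro q
    simp only [Matrix.of_apply]
    by_cases hq : q = w p
    · subst hq; simp
    · have h2 : w p ≠ q := fun h => hq h.symm
      simp [h2, hq]
  rw [Finset.sum_congr rfl fun q _ => key q, Finset.sum_ite_eq' Finset.univ (w p)
    (fun q => if p.1 < i ∧ q.1 < j then (1:ℤ) else 0)]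
  simp

lemma cnt_sub_ite (w : Equiv.Perm (Fin n)) (i j : ℕ) :
    cnt w i j = ∑ p : Fin n, if p.1 < i then (if (w p).1 < j then (1:ℤ) else 0) else 0 := by
  unfold cnt
  refine Finset.sum_congr rfl fun p _ => ?_
  by_cases h : p.1 < i <;> simp [h]

lemma cnt_zero (w : Equiv.Perm (Fin n)) (j : ℕ) : cnt w 0 j = 0 := by
  unfold cnt; simp

lemma cnt_succ (w : Equiv.Perm (Fin n)) (i j : ℕ) (h : i < n) :
    cnt w (i+1) j = cnt w i j + (if (w ⟨i, h⟩).1 < j then 1 else 0) := by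
  rw [cnt_sub_ite, cnt_sub_ite, sum_if_succ (fun p => if (w p).1 < j then (1:ℤ) else 0) i h]

lemma cnt_nonneg (w : Equiv.Perm (Fin n)) (i j : ℕ) : 0 ≤ cnt w i j := by
  unfold cnt
  exact Finset.sum_nonneg fun p _ => by positivity


end ASMAux
namespace ASMAux

def mm (n : ℕ) (A : Matrix (Fin n) (Fin n) ℤ) (b i : ℕ) : ℕ := (rk n A i b).toNat

def fJ (n : ℕ) (A : Matrix (Fin n) (Fin n) ℤ) (b : ℕ) (p : Fin n) : Fin n :=
  ⟨(if mm n A b (p.1+1) = mm n A b p.1 + 1 then mm n A b p.1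
    else b + p.1 - mm n A b p.1) % n,
   Nat.mod_lt _ (Nat.lt_of_le_of_lt (Nat.zero_le _) p.2)⟩

def fM (n : ℕ) (A : Matrix (Fin n) (Fin n) ℤ) (b : ℕ) (p : Fin n) : Fin n :=
  ⟨(if mm n A b (p.1+1) = mm n A b p.1 + 1 then b - 1 - mm n A b p.1
    else n - 1 - p.1 + mm n A b p.1) % n,
   Nat.mod_lt _ (Nat.lt_of_le_of_lt (Nat.zero_le _) p.2)⟩

section mmFacts

variable {n b : ℕ} {A : Matrix (Fin n) (Fin n) ℤ} (hA : IsASM n A) (hb1 : 1 ≤ b) (hbn : b ≤ n)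

include hA hbn

lemma mm_cast {i : ℕ} (hi : i ≤ n) : (mm n A b i : ℤ) = rk n A i b := by
  unfold mm
  exact Int.toNat_of_nonneg (rk_nonneg hA hi hbn)

lemma mm_zero : mm n A b 0 = 0 := by
  unfold mm; rw [rk_zero_row]; rfl

lemma mm_n : mm n A b n = b := by
  unfold mm; rw [rk_col_full hA b hbn]; simp

lemma mm_step {i : ℕ} (hi : i < n) :
    mm n A b (i+1) = mm n A b i ∨ mm n A b (i+1) = mm n A b i + 1 := by
  have h1 := rk_row_step hA i b hi hbn
  have h2 := mm_cast hA hbn (le_of_lt hi)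
  have h3 := mm_cast hA hbn (by omega : i + 1 ≤ n)
  omega

lemma mm_mono {i i' : ℕ} (hii : i ≤ i') (hi' : i' ≤ n) : mm n A b i ≤ mm n A b i' := by
  have h1 := rk_mono_row hA hii hi' hbn
  have h2 := mm_cast hA hbn (le_trans hii hi')
  have h3 := mm_cast hA hbn hi'
  omega

lemma mm_lip {i i' : ℕ} (hii : i ≤ i') (hi' : i' ≤ n) :
    mm n A b i' ≤ mm n A b i + (i' - i) := by
  have h1 := rk_lip_row hA hii hi' hbn
  have h2 := mm_cast hA hbn (le_trans hii hi')
  have h3 := mm_cast hA hbn hi'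
  omega

lemma mm_le_i {i : ℕ} (hi : i ≤ n) : mm n A b i ≤ i := by
  have h1 := rk_le_i hA hi hbn
  have h2 := mm_cast hA hbn hi
  omega

lemma mm_le_b {i : ℕ} (hi : i ≤ n) : mm n A b i ≤ b := by
  have h1 := rk_le_j hA hi hbn
  have h2 := mm_cast hA hbn hi
  omega

lemma mm_def {i : ℕ} (hi : i ≤ n) : i + b ≤ n + mm n A b i := by
  have h1 := rk_ge_sub hA hi hbn
  have h2 := mm_cast hA hbn hi
  omega

lemma fJ_val_T {p : Fin n} (h : mm n A b (p.1+1) = mm n A b p.1 + 1) :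
    (fJ n A b p).1 = mm n A b p.1 := by
  have h1 : mm n A b p.1 ≤ p.1 := mm_le_i hA hbn (le_of_lt p.2)
  have hv : (fJ n A b p).1 = (if mm n A b (p.1+1) = mm n A b p.1 + 1 then mm n A b p.1
      else b + p.1 - mm n A b p.1) % n := rfl
  rw [hv, if_pos h]
  have h0 : p.1 < n := p.2
  exact Nat.mod_eq_of_lt (by omega)

lemma fJ_val_B {p : Fin n} (h : mm n A b (p.1+1) = mm n A b p.1) :
    (fJ n A b p).1 = b + p.1 - mm n A b p.1 := by
  have h1 : mm n A b p.1 ≤ p.1 := mm_le_i hA hbn (le_of_lt p.2)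
  have h2 : p.1 + 1 + b ≤ n + mm n A b (p.1+1) := mm_def hA hbn p.2
  have hv : (fJ n A b p).1 = (if mm n A b (p.1+1) = mm n A b p.1 + 1 then mm n A b p.1
      else b + p.1 - mm n A b p.1) % n := rfl
  rw [hv, if_neg (by omega)]
  exact Nat.mod_eq_of_lt (by omega)

lemma fM_val_T {p : Fin n} (h : mm n A b (p.1+1) = mm n A b p.1 + 1) :
    (fM n A b p).1 = b - 1 - mm n A b p.1 := by
  have h1 : mm n A b (p.1+1) ≤ b := mm_le_b hA hbn p.2
  have hv : (fM n A b p).1 = (if mm n A b (p.1+1) = mm n A b p.1 + 1 then b - 1 - mm n A b p.1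
      else n - 1 - p.1 + mm n A b p.1) % n := rfl
  rw [hv, if_pos h]
  have h0 : p.1 < n := p.2
  exact Nat.mod_eq_of_lt (by omega)

lemma fM_val_B {p : Fin n} (h : mm n A b (p.1+1) = mm n A b p.1) :
    (fM n A b p).1 = n - 1 - p.1 + mm n A b p.1 := by
  have h1 : mm n A b p.1 ≤ p.1 := mm_le_i hA hbn (le_of_lt p.2)
  have h0 : p.1 < n := p.2
  have hv : (fM n A b p).1 = (if mm n A b (p.1+1) = mm n A b p.1 + 1 then b - 1 - mm n A b p.1
      else n - 1 - p.1 + mm n A b p.1) % n := rfl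
  rw [hv, if_neg (by omega)]
  exact Nat.mod_eq_of_lt (by omega)

lemma fJ_inj : Function.Injective (fJ n A b) := by
  have key : ∀ p p' : Fin n, p.1 < p'.1 → fJ n A b p ≠ fJ n A b p' := by
    intro p p' hlt heq
    have hfe : (fJ n A b p).1 = (fJ n A b p').1 := congrArg Fin.val heq
    have hp : p.1 < n := p.2
    have hp' : p'.1 < n := p'.2
    have hlep : mm n A b p.1 ≤ p.1 := mm_le_i hA hbn (by omega)
    have hlep' : mm n A b p'.1 ≤ p'.1 := mm_le_i hA hbn (by omega)
    have hmono : mm n A b (p.1+1) ≤ mm n A b p'.1 := mm_mono hA hbn (by omega) (by omega)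
    have hlip : mm n A b p'.1 ≤ mm n A b (p.1+1) + (p'.1 - (p.1+1)) := mm_lip hA hbn (by omega) (by omega)
    rcases mm_step hA hbn hp with h1 | h1 <;> rcases mm_step hA hbn hp' with h2 | h2
    · rw [fJ_val_B hA hbn h1, fJ_val_B hA hbn h2] at hfe; omega
    · rw [fJ_val_B hA hbn h1, fJ_val_T hA hbn h2] at hfe
      have : mm n A b (p'.1+1) ≤ b := mm_le_b hA hbn p'.2
      have : p.1 + 1 + b ≤ n + mm n A b (p.1+1) := mm_def hA hbn p.2
      omega
    · rw [fJ_val_T hA hbn h1, fJ_val_B hA hbn h2] at hfe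
      have : mm n A b (p.1+1) ≤ b := mm_le_b hA hbn p.2
      omega
    · rw [fJ_val_T hA hbn h1, fJ_val_T hA hbn h2] at hfe; omega
  intro p p' heq
  rcases lt_trichotomy p.1 p'.1 with h | h | h
  · exact absurd heq (key p p' h)
  · exact Fin.ext h
  · exact absurd heq.symm (key p' p h)

lemma fM_inj : Function.Injective (fM n A b) := by
  have key : ∀ p p' : Fin n, p.1 < p'.1 → fM n A b p ≠ fM n A b p' := by
    intro p p' hlt heq
    have hfe : (fM n A b p).1 = (fM n A b p').1 := congrArg Fin.val heq
    have hp : p.1 < n := p.2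
    have hp' : p'.1 < n := p'.2
    have hlep : mm n A b p.1 ≤ p.1 := mm_le_i hA hbn (by omega)
    have hlep' : mm n A b p'.1 ≤ p'.1 := mm_le_i hA hbn (by omega)
    have hmono : mm n A b (p.1+1) ≤ mm n A b p'.1 := mm_mono hA hbn (by omega) (by omega)
    have hlip : mm n A b p'.1 ≤ mm n A b (p.1+1) + (p'.1 - (p.1+1)) := mm_lip hA hbn (by omega) (by omega)
    rcases mm_step hA hbn hp with h1 | h1 <;> rcases mm_step hA hbn hp' with h2 | h2
    · rw [fM_val_B hA hbn h1, fM_val_B hA hbn h2] at hfe; omega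
    · rw [fM_val_B hA hbn h1, fM_val_T hA hbn h2] at hfe
      have hd : p.1 + 1 + b ≤ n + mm n A b (p.1+1) := mm_def hA hbn p.2
      have : mm n A b (p'.1+1) ≤ b := mm_le_b hA hbn p'.2
      omega
    · rw [fM_val_T hA hbn h1, fM_val_B hA hbn h2] at hfe
      have hd : p'.1 + 1 + b ≤ n + mm n A b (p'.1+1) := mm_def hA hbn p'.2
      have : mm n A b (p.1+1) ≤ b := mm_le_b hA hbn p.2
      omega
    · rw [fM_val_T hA hbn h1, fM_val_T hA hbn h2] at hfe
      have : mm n A b (p.1+1) ≤ b := mm_le_b hA hbn p.2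
      have : mm n A b (p'.1+1) ≤ b := mm_le_b hA hbn p'.2
      omega
  intro p p' heq
  rcases lt_trichotomy p.1 p'.1 with h | h | h
  · exact absurd heq (key p p' h)
  · exact Fin.ext h
  · exact absurd heq.symm (key p' p h)

end mmFacts

end ASMAux
namespace ASMAux

section witnesses

variable {n b : ℕ} {A : Matrix (Fin n) (Fin n) ℤ} (hA : IsASM n A) (hb1 : 1 ≤ b) (hbn : b ≤ n)

include hA hbn

lemma exists_wJ : ∃ w : Equiv.Perm (Fin n), ∀ p, w p = fJ n A b p :=
  ⟨Equiv.ofBijective _ ((Finite.injective_iff_bijective).mp (fJ_inj hA hbn)), fun _ => rfl⟩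

lemma exists_wM : ∃ w : Equiv.Perm (Fin n), ∀ p, w p = fM n A b p :=
  ⟨Equiv.ofBijective _ ((Finite.injective_iff_bijective).mp (fM_inj hA hbn)), fun _ => rfl⟩

variable {w : Equiv.Perm (Fin n)}

lemma cnt_wJ (hw : ∀ p, w p = fJ n A b p) :
    ∀ i, i ≤ n → ∀ j, j ≤ n → cnt w i j =
      if j ≤ b then min (mm n A b i : ℤ) j else min (i : ℤ) (mm n A b i + j - b) := by
  intro i
  induction i with
  | zero =>
    intro _ j hj
    rw [cnt_zero, mm_zero hA hbn]
    split_ifs <;> [skip; skip] <;> simp <;> omega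
  | succ m ih =>
    intro him j hj
    have hm : m < n := by omega
    have ihm := ih (by omega) j hj
    rw [cnt_succ w m j hm, hw ⟨m, hm⟩, ihm]
    have h1 : mm n A b m ≤ m := mm_le_i hA hbn (by omega)
    have h2 : mm n A b m ≤ b := mm_le_b hA hbn (by omega)
    have h3 : m + 1 + b ≤ n + mm n A b (m+1) := mm_def hA hbn (by omega)
    have h5 : mm n A b (m+1) ≤ b := mm_le_b hA hbn (by omega)
    have h6 : mm n A b (m+1) ≤ m + 1 := mm_le_i hA hbn (by omega)
    rcases mm_step hA hbn hm with hT | hT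
    · have hv : (fJ n A b ⟨m, hm⟩).1 = b + m - mm n A b m := fJ_val_B hA hbn hT
      rw [hv]; rw [hT] at h3 h5 h6 ⊢
      split_ifs <;> omega
    · have hv : (fJ n A b ⟨m, hm⟩).1 = mm n A b m := fJ_val_T hA hbn hT
      rw [hv]; rw [hT] at h3 h5 h6 ⊢
      split_ifs <;> omega

lemma cnt_wM (hw : ∀ p, w p = fM n A b p) :
    ∀ i, i ≤ n → ∀ j, j ≤ n → cnt w i j =
      if j ≤ b then max 0 ((mm n A b i : ℤ) + j - b) else max (mm n A b i : ℤ) ((i : ℤ) + j - n) := by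
  intro i
  induction i with
  | zero =>
    intro _ j hj
    rw [cnt_zero, mm_zero hA hbn]
    split_ifs <;> simp <;> omega
  | succ m ih =>
    intro him j hj
    have hm : m < n := by omega
    have ihm := ih (by omega) j hj
    rw [cnt_succ w m j hm, hw ⟨m, hm⟩, ihm]
    have h1 : mm n A b m ≤ m := mm_le_i hA hbn (by omega)
    have h2 : mm n A b m ≤ b := mm_le_b hA hbn (by omega)
    have h3 : m + 1 + b ≤ n + mm n A b (m+1) := mm_def hA hbn (by omega)
    have h5 : mm n A b (m+1) ≤ b := mm_le_b hA hbn (by omega)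
    have h6 : mm n A b (m+1) ≤ m + 1 := mm_le_i hA hbn (by omega)
    rcases mm_step hA hbn hm with hT | hT
    · have hv : (fM n A b ⟨m, hm⟩).1 = n - 1 - m + mm n A b m := fM_val_B hA hbn hT
      rw [hv]; rw [hT] at h3 h5 h6 ⊢
      split_ifs <;> omega
    · have hv : (fM n A b ⟨m, hm⟩).1 = b - 1 - mm n A b m := fM_val_T hA hbn hT
      rw [hv]; rw [hT] at h3 h5 h6 ⊢
      split_ifs <;> omega

lemma wJ_ge (hw : ∀ p, w p = fJ n A b p) {i j : ℕ} (hin : i ≤ n) (hjn : j ≤ n) :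
    rk n A i j ≤ cnt w i j := by
  rw [cnt_wJ hA hbn hw i hin j hjn]
  have h2 := mm_cast hA hbn hin
  have h4 : rk n A i j ≤ (j : ℤ) := rk_le_j hA hin hjn
  have h5 : rk n A i j ≤ (i : ℤ) := rk_le_i hA hin hjn
  by_cases h : j ≤ b
  · have h6 : rk n A i j ≤ rk n A i b := rk_mono_col hA h hbn hin
    split_ifs
    omega
  · have h6 : rk n A i j ≤ rk n A i b + ((j - b : ℕ) : ℤ) := rk_lip_col hA (by omega) hjn hin
    split_ifs
    omega

lemma wJ_col_eq (hw : ∀ p, w p = fJ n A b p) {i : ℕ} (hin : i ≤ n) :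
    cnt w i b = rk n A i b := by
  rw [cnt_wJ hA hbn hw i hin b hbn]
  have h2 := mm_cast hA hbn hin
  have h3 : mm n A b i ≤ b := mm_le_b hA hbn hin
  simp only [le_refl, if_true]
  omega

lemma wM_le (hw : ∀ p, w p = fM n A b p) {i j : ℕ} (hin : i ≤ n) (hjn : j ≤ n) :
    cnt w i j ≤ rk n A i j := by
  rw [cnt_wM hA hbn hw i hin j hjn]
  have h2 := mm_cast hA hbn hin
  have h4 : 0 ≤ rk n A i j := rk_nonneg hA hin hjn
  have h5 : (i : ℤ) + j - n ≤ rk n A i j := rk_ge_sub hA hin hjn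
  by_cases h : j ≤ b
  · have h6 : rk n A i b ≤ rk n A i j + ((b - j : ℕ) : ℤ) := rk_lip_col hA h hbn hin
    split_ifs
    omega
  · have h6 : rk n A i b ≤ rk n A i j := rk_mono_col hA (by omega) hjn hin
    split_ifs
    omega

lemma wM_col_eq (hw : ∀ p, w p = fM n A b p) {i : ℕ} (hin : i ≤ n) :
    cnt w i b = rk n A i b := by
  rw [cnt_wM hA hbn hw i hin b hbn]
  have h2 := mm_cast hA hbn hin
  have h4 : 0 ≤ rk n A i b := rk_nonneg hA hin hbn
  simp only [le_refl, if_true]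
  omega

include hb1

lemma wJ_minrep {I : Finset ℕ} (hIcc : I ⊆ Finset.Icc 1 (n-1))
    (hcond : ∀ i ∈ I, ∀ j, 1 ≤ j → j ≤ n →
      rk n A i j = rk n A (i - 1) j + 1 ∨ rk n A i j = rk n A (i + 1) j)
    (hw : ∀ p, w p = fJ n A b p) : IsMinRep n I w := by
  intro p q hpI hq
  rw [Fin.lt_def, hw p, hw q]
  have hp1 : p.1 < n := p.2
  have hq1 : q.1 < n := q.2
  have hlep : mm n A b p.1 ≤ p.1 := mm_le_i hA hbn (by omega)
  have hleq : mm n A b q.1 ≤ q.1 := mm_le_i hA hbn (by omega)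
  have hlebq : mm n A b (q.1+1) ≤ b := mm_le_b hA hbn (by omega)
  rcases mm_step hA hbn hp1 with h1 | h1 <;> rcases mm_step hA hbn hq1 with h2 | h2
  · -- B, B
    rw [fJ_val_B hA hbn h1, fJ_val_B hA hbn h2, hq]
    rw [hq] at h2
    omega
  · -- B, T : excluded by the ASM^I condition
    exfalso
    rcases hcond (p.1+1) hpI b hb1 hbn with hc | hc
    · simp only [Nat.add_sub_cancel] at hc
      have e1 := mm_cast hA hbn (show p.1 + 1 ≤ n by omega)
      have e2 := mm_cast hA hbn (show p.1 ≤ n by omega)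
      omega
    · have e1 := mm_cast hA hbn (show p.1 + 1 ≤ n by omega)
      have e2 := mm_cast hA hbn (show p.1 + 1 + 1 ≤ n by omega)
      rw [hq] at h2
      omega
  · -- T, B
    rw [fJ_val_T hA hbn h1, fJ_val_B hA hbn h2]
    have : mm n A b (p.1+1) ≤ b := mm_le_b hA hbn (by omega)
    omega
  · -- T, T
    rw [fJ_val_T hA hbn h1, fJ_val_T hA hbn h2, hq]
    have hmono : mm n A b (p.1+1) ≤ mm n A b q.1 := by rw [hq]
    omega

end witnesses

end ASMAux
namespace ASMAux

open Finset

variable {n : ℕ}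

lemma cnt_swap (w : Equiv.Perm (Fin n)) (p q : Fin n) (hq : q.1 = p.1 + 1)
    (hlt : (w q).1 < (w p).1) (i j : ℕ) :
    cnt (w * Equiv.swap p q) i j = cnt w i j +
      (if p.1 < i ∧ i ≤ q.1 ∧ (w q).1 < j ∧ j ≤ (w p).1 then 1 else 0) := by
  have hpq : p ≠ q := by
    intro h
    rw [h] at hq
    omega
  have key : ∀ x : Fin n, (if x.1 < i ∧ ((w * Equiv.swap p q) x).1 < j then (1:ℤ) else 0)
      = (if x.1 < i ∧ (w x).1 < j then (1:ℤ) else 0)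
        + (if x = p then ((if p.1 < i ∧ (w q).1 < j then (1:ℤ) else 0) - (if p.1 < i ∧ (w p).1 < j then (1:ℤ) else 0)) else 0)
        + (if x = q then ((if q.1 < i ∧ (w p).1 < j then (1:ℤ) else 0) - (if q.1 < i ∧ (w q).1 < j then (1:ℤ) else 0)) else 0) := by
    intro x
    by_cases hxp : x = p
    · subst hxp
      have h1 : (w * Equiv.swap x q) x = w q := by
        simp [Equiv.Perm.mul_apply, Equiv.swap_apply_left]
      rw [h1]
      simp [hpq]
    · by_cases hxq : x = q
      · subst hxq
        have h1 : (w * Equiv.swap p x) x = w p := by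
          simp [Equiv.Perm.mul_apply, Equiv.swap_apply_right]
        rw [h1]
        simp [hxp]
      · have h1 : (w * Equiv.swap p q) x = w x := by
          simp [Equiv.Perm.mul_apply, Equiv.swap_apply_of_ne_of_ne hxp hxq]
        rw [h1]
        simp [hxp, hxq]
  unfold cnt
  rw [Finset.sum_congr rfl fun x _ => key x, Finset.sum_add_distrib, Finset.sum_add_distrib,
    Finset.sum_ite_eq' Finset.univ p, Finset.sum_ite_eq' Finset.univ q]
  simp only [Finset.mem_univ, if_true]
  have hqn : (w q).1 < n := (w q).2
  have hpn : (w p).1 < n := (w p).2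
  split_ifs <;> omega

lemma meet_witness {I : Finset ℕ} {A : Matrix (Fin n) (Fin n) ℤ}
    (hI : I ⊆ Finset.Icc 1 (n-1)) (hA : InASMI n I A)
    {a b : ℕ} (ha1 : 1 ≤ a) (han : a ≤ n) (hb1 : 1 ≤ b) (hbn : b ≤ n) :
    ∃ w : Equiv.Perm (Fin n), IsMinRep n I w ∧
      (∀ i j, 1 ≤ i → i ≤ n → 1 ≤ j → j ≤ n → cnt w i j ≤ rk n A i j) ∧
      cnt w a b = rk n A a b := by
  classical
  obtain ⟨w0, hw0⟩ := exists_wM hA.1 hbn (b := b)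
  set P : Equiv.Perm (Fin n) → Prop := fun w =>
    (∀ i j, 1 ≤ i → i ≤ n → 1 ≤ j → j ≤ n → cnt w i j ≤ rk n A i j) ∧
      cnt w a b = rk n A a b with hP
  have hw0P : P w0 := by
    constructor
    · intro i j _ hin _ hjn
      exact wM_le hA.1 hbn hw0 hin hjn
    · exact wM_col_eq hA.1 hbn hw0 han
  set s : Finset (Equiv.Perm (Fin n)) := Finset.univ.filter P with hs
  have hne : s.Nonempty := ⟨w0, Finset.mem_filter.mpr ⟨Finset.mem_univ _, hw0P⟩⟩
  obtain ⟨w, hws, hwmax⟩ := Finset.exists_max_image s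
    (fun w => ∑ x ∈ Finset.range (n+1) ×ˢ Finset.range (n+1), cnt w x.1 x.2) hne
  have hwP : P w := (Finset.mem_filter.mp hws).2
  refine ⟨w, ?_, hwP.1, hwP.2⟩
  intro p q hpI hq
  by_contra hnot
  have hqp : q ≠ p := by
    intro h
    rw [h] at hq
    omega
  have hne2 : w q ≠ w p := fun h => hqp (w.injective h)
  have hlt : (w q).1 < (w p).1 := by
    rcases lt_or_ge (w q).1 (w p).1 with h | h
    · exact h
    · exfalso
      apply hnot
      rw [Fin.lt_def]
      rcases lt_or_eq_of_le h with h' | h'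
      · exact h'
      · exact absurd (Fin.ext h'.symm : w q = w p) hne2
  have hIcc := Finset.mem_Icc.mp (hI hpI)
  have hp1 : p.1 + 1 ≤ n - 1 := hIcc.2
  have hn1 : 1 ≤ n := by omega
  -- strictness
  have hstrict : ∀ j, (w q).1 < j → j ≤ (w p).1 → cnt w (p.1+1) j < rk n A (p.1+1) j := by
    intro j hj1 hj2
    have hjn : j ≤ n := by
      have := (w p).2
      omega
    have hj1' : 1 ≤ j := by omega
    have hle : cnt w (p.1+1) j ≤ rk n A (p.1+1) j := hwP.1 _ _ (by omega) (by omega) hj1' hjn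
    rcases lt_or_eq_of_le hle with h | heq
    · exact h
    exfalso
    have hstep : cnt w (p.1+1) j = cnt w p.1 j + (if (w ⟨p.1, p.2⟩).1 < j then 1 else 0) :=
      cnt_succ w p.1 j p.2
    have hPeta : (⟨p.1, p.2⟩ : Fin n) = p := rfl
    rw [hPeta] at hstep
    have hnp : ¬ (w p).1 < j := by omega
    rw [if_neg hnp, add_zero] at hstep
    rcases hA.2 (p.1+1) hpI j hj1' hjn with hc | hc
    · simp only [Nat.add_sub_cancel] at hc
      rcases Nat.eq_zero_or_pos p.1 with h0 | h0
      · rw [h0] at hstep hc heq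
        rw [cnt_zero] at hstep
        rw [rk_zero_row] at hc
        omega
      · have := hwP.1 p.1 j h0 (by omega) hj1' hjn
        omega
    · have hq2 : q.1 < n := q.2
      have hstep2 : cnt w (q.1+1) j = cnt w q.1 j + (if (w ⟨q.1, q.2⟩).1 < j then 1 else 0) :=
        cnt_succ w q.1 j q.2
      have hQeta : (⟨q.1, q.2⟩ : Fin n) = q := rfl
      rw [hQeta, if_pos (by omega : (w q).1 < j)] at hstep2
      have hmem : cnt w (q.1+1) j ≤ rk n A (q.1+1) j := hwP.1 _ _ (by omega) (by omega) hj1' hjn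
      rw [hq] at hstep2 hmem
      omega
  -- the swapped permutation still satisfies P, with strictly bigger total
  set w' := w * Equiv.swap p q with hw'
  have hsw := cnt_swap w p q hq hlt
  have hPw' : P w' := by
    constructor
    · intro i j hi1 hin hj1 hjn
      rw [hsw i j]
      split_ifs with hcond
      · have hieq : i = p.1 + 1 := by omega
        have := hstrict j hcond.2.2.1 hcond.2.2.2
        rw [hieq]
        omega
      · rw [add_zero]
        exact hwP.1 i j hi1 hin hj1 hjn
    · rw [hsw a b]
      split_ifs with hcond
      · exfalso
        have hieq : a = p.1 + 1 := by omega
        have h2 := hwP.2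
        rw [hieq] at h2
        have := hstrict b hcond.2.2.1 hcond.2.2.2
        omega
      · rw [add_zero]
        exact hwP.2
  have hwmem' : w' ∈ s := Finset.mem_filter.mpr ⟨Finset.mem_univ _, hPw'⟩
  have hFle := hwmax w' hwmem'
  have hFlt : (∑ x ∈ Finset.range (n+1) ×ˢ Finset.range (n+1), cnt w x.1 x.2)
      < ∑ x ∈ Finset.range (n+1) ×ˢ Finset.range (n+1), cnt w' x.1 x.2 := by
    apply Finset.sum_lt_sum
    · intro x _
      rw [hsw x.1 x.2]
      split_ifs <;> omega
    · refine ⟨(p.1+1, (w q).1+1), ?_, ?_⟩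
      · rw [Finset.mem_product]
        constructor <;> rw [Finset.mem_range]
        · omega
        · have := (w q).2
          omega
      · show cnt w (p.1+1) ((w q).1+1) < cnt w' (p.1+1) ((w q).1+1)
        rw [hsw (p.1+1) ((w q).1+1)]
        have hcond : p.1 < p.1+1 ∧ p.1+1 ≤ q.1 ∧ (w q).1 < (w q).1+1 ∧ (w q).1+1 ≤ (w p).1 := by
          omega
        rw [if_pos hcond]
        omega
  exact absurd hFle (not_le.mpr hFlt)

end ASMAux

/-- `ASM^I(n)` is the Dedekind–MacNeille completion of the Bruhat order on `S_n^I`: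
every `A ∈ ASM^I(n)` is (i) the join, in `ASM^I(n)`, of the permutation matrices of the
elements of `S_n^I` lying below it, and (ii) the meet, in `ASM^I(n)`, of the permutation
matrices of the elements of `S_n^I` lying above it.  (Since `A` is trivially an upper,
resp. lower, bound of these sets, this is exactly the leastness/greatestness assertion.) -/
theorem stmt0 (n : ℕ) (hn : 1 ≤ n) (I : Finset ℕ) (hI : I ⊆ Finset.Icc 1 (n - 1))
    (A : Matrix (Fin n) (Fin n) ℤ) (hA : InASMI n I A) :
    (∀ C, InASMI n I C →
      (∀ w : Equiv.Perm (Fin n), IsMinRep n I w →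
        blE n (permMatrix n w) A → blE n (permMatrix n w) C) →
      blE n A C) ∧
    (∀ C, InASMI n I C →
      (∀ w : Equiv.Perm (Fin n), IsMinRep n I w →
        blE n A (permMatrix n w) → blE n C (permMatrix n w)) →
      blE n C A) := by
  have hASM := hA.1
  constructor
  · intro C _hC H i j hi1 hin hj1 hjn
    obtain ⟨w, hw⟩ := ASMAux.exists_wJ hASM hjn (b := j)
    have hmr : IsMinRep n I w := ASMAux.wJ_minrep hASM hj1 hjn hI hA.2 hw
    have hble : blE n (permMatrix n w) A := by
      intro i' j' _ hi'n _ hj'n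
      rw [ASMAux.rk_permMatrix]
      exact ASMAux.wJ_ge hASM hjn hw hi'n hj'n
    have h2 := H w hmr hble i j hi1 hin hj1 hjn
    rw [ASMAux.rk_permMatrix, ASMAux.wJ_col_eq hASM hjn hw hin] at h2
    exact h2
  · intro C _hC H i j hi1 hin hj1 hjn
    obtain ⟨w, hmr, hle, heq⟩ := ASMAux.meet_witness hI hA hi1 hin hj1 hjn
    have hble : blE n A (permMatrix n w) := by
      intro i' j' h1 h2 h3 h4
      rw [ASMAux.rk_permMatrix]
      exact hle i' j' h1 h2 h3 h4
    have h2 := H w hmr hble i j hi1 hin hj1 hjn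
    rw [ASMAux.rk_permMatrix, heq] at h2
    exact h2
end

section
/- Let n ≥ 1 and I ⊆ [n-1]. If A, B ∈ ASM^I(n), then the join A ∨ B computed in the lattice ASM(n) again lies in ASM^I(n). Consequently ASM^I(n), with the order induced from ASM(n), is a lattice: its minimum element is the identity matrix, and the join of any two elements of ASM^I(n) coincides with their join in ASM(n). -/
-- helper: one-dimensional partial-sum step
lemma sum_lt_succ {n : ℕ} (f : Fin n → ℤ) (j : ℕ) (hj : j < n) :
    (∑ q : Fin n, if q.1 < j + 1 then f q else 0)
      = (∑ q : Fin n, if q.1 < j then f q else 0) + f ⟨j, hj⟩ := by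
  have h : ∀ q : Fin n, (if q.1 < j + 1 then f q else 0)
      = (if q.1 < j then f q else 0) + (if q = ⟨j, hj⟩ then f q else 0) := by
    intro q
    by_cases h1 : q = ⟨j, hj⟩
    · subst h1; simp
    · have h2 : q.1 ≠ j := fun h => h1 (Fin.ext h)
      by_cases h3 : q.1 < j
      · simp [h3, h1, Nat.lt_succ_of_lt h3]
      · have : ¬ q.1 < j + 1 := by omega
        simp [h3, h1, this]
  rw [Finset.sum_congr rfl (fun q _ => h q), Finset.sum_add_distrib]
  simp

def rps (n : ℕ) (A : Matrix (Fin n) (Fin n) ℤ) (p : Fin n) (j : ℕ) : ℤ :=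
  ∑ q : Fin n, if q.1 < j then A p q else 0

def cps (n : ℕ) (A : Matrix (Fin n) (Fin n) ℤ) (q : Fin n) (i : ℕ) : ℤ :=
  ∑ p : Fin n, if p.1 < i then A p q else 0

lemma rk_eq_row (n : ℕ) (A : Matrix (Fin n) (Fin n) ℤ) (i j : ℕ) :
    rk n A i j = ∑ p : Fin n, if p.1 < i then rps n A p j else 0 := by
  unfold rk rps
  refine Finset.sum_congr rfl fun p _ => ?_
  by_cases h : p.1 < i <;> simp [h]

lemma rk_eq_col (n : ℕ) (A : Matrix (Fin n) (Fin n) ℤ) (i j : ℕ) :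
    rk n A i j = ∑ q : Fin n, if q.1 < j then cps n A q i else 0 := by
  unfold rk cps
  rw [Finset.sum_comm]
  refine Finset.sum_congr rfl fun q _ => ?_
  by_cases h : q.1 < j <;> simp [h, and_comm]

lemma rk_succ_row (n : ℕ) (A : Matrix (Fin n) (Fin n) ℤ) (i j : ℕ) (hi : i < n) :
    rk n A (i + 1) j = rk n A i j + rps n A ⟨i, hi⟩ j := by
  rw [rk_eq_row, rk_eq_row]; exact sum_lt_succ _ i hi

lemma rk_succ_col (n : ℕ) (A : Matrix (Fin n) (Fin n) ℤ) (i j : ℕ) (hj : j < n) :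
    rk n A i (j + 1) = rk n A i j + cps n A ⟨j, hj⟩ i := by
  rw [rk_eq_col, rk_eq_col]; exact sum_lt_succ _ j hj

lemma rk_zero_row (n : ℕ) (A : Matrix (Fin n) (Fin n) ℤ) (j : ℕ) : rk n A 0 j = 0 := by
  simp [rk]

lemma rk_zero_col (n : ℕ) (A : Matrix (Fin n) (Fin n) ℤ) (i : ℕ) : rk n A i 0 = 0 := by
  simp [rk]

lemma rps_mem (n : ℕ) (A : Matrix (Fin n) (Fin n) ℤ) (hA : IsASM n A) (p : Fin n)
    (j : ℕ) (hj : j ≤ n) : rps n A p j = 0 ∨ rps n A p j = 1 := hA.2.1 p j hj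

lemma cps_mem (n : ℕ) (A : Matrix (Fin n) (Fin n) ℤ) (hA : IsASM n A) (q : Fin n)
    (i : ℕ) (hi : i ≤ n) : cps n A q i = 0 ∨ cps n A q i = 1 := hA.2.2.1 q i hi

lemma rps_full (n : ℕ) (A : Matrix (Fin n) (Fin n) ℤ) (hA : IsASM n A) (p : Fin n) :
    rps n A p n = 1 := by
  have : rps n A p n = ∑ q : Fin n, A p q := by
    refine Finset.sum_congr rfl fun q _ => ?_; simp [q.2]
  rw [this]; exact hA.2.2.2.1 p

lemma cps_full (n : ℕ) (A : Matrix (Fin n) (Fin n) ℤ) (hA : IsASM n A) (q : Fin n) :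
    cps n A q n = 1 := by
  have : cps n A q n = ∑ p : Fin n, A p q := by
    refine Finset.sum_congr rfl fun p _ => ?_; simp [p.2]
  rw [this]; exact hA.2.2.2.2 q

-- increments for ASMs
lemma rk_row_step (n : ℕ) (A : Matrix (Fin n) (Fin n) ℤ) (hA : IsASM n A) (i j : ℕ)
    (hi : i < n) (hj : j ≤ n) :
    rk n A i j ≤ rk n A (i + 1) j ∧ rk n A (i + 1) j ≤ rk n A i j + 1 := by
  rw [rk_succ_row n A i j hi]
  rcases rps_mem n A hA ⟨i, hi⟩ j hj with h | h <;> omega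

lemma rk_col_step (n : ℕ) (A : Matrix (Fin n) (Fin n) ℤ) (hA : IsASM n A) (i j : ℕ)
    (hj : j < n) (hi : i ≤ n) :
    rk n A i j ≤ rk n A i (j + 1) ∧ rk n A i (j + 1) ≤ rk n A i j + 1 := by
  rw [rk_succ_col n A i j hj]
  rcases cps_mem n A hA ⟨j, hj⟩ i hi with h | h <;> omega

lemma rk_row_full (n : ℕ) (A : Matrix (Fin n) (Fin n) ℤ) (hA : IsASM n A) :
    ∀ i, i ≤ n → rk n A i n = i := by
  intro i
  induction i with
  | zero => intro _; simp [rk_zero_row]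
  | succ i ih =>
    intro hi
    rw [rk_succ_row n A i n (by omega), ih (by omega), rps_full n A hA]
    push_cast; ring

lemma rk_col_full (n : ℕ) (A : Matrix (Fin n) (Fin n) ℤ) (hA : IsASM n A) :
    ∀ j, j ≤ n → rk n A n j = j := by
  intro j
  induction j with
  | zero => intro _; simp [rk_zero_col]
  | succ j ih =>
    intro hj
    rw [rk_succ_col n A n j (by omega), ih (by omega), cps_full n A hA]
    push_cast; ring

lemma rk_nonneg (n : ℕ) (A : Matrix (Fin n) (Fin n) ℤ) (hA : IsASM n A) :
    ∀ i j, i ≤ n → j ≤ n → 0 ≤ rk n A i j := by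
  intro i
  induction i with
  | zero => intro j _ _; simp [rk_zero_row]
  | succ i ih =>
    intro j hi hj
    have := rk_row_step n A hA i j (by omega) hj
    have := ih j (by omega) hj
    omega

lemma rk_le_row (n : ℕ) (A : Matrix (Fin n) (Fin n) ℤ) (hA : IsASM n A) :
    ∀ i j, i ≤ n → j ≤ n → rk n A i j ≤ i := by
  intro i
  induction i with
  | zero => intro j _ _; simp [rk_zero_row]
  | succ i ih =>
    intro j hi hj
    have := rk_row_step n A hA i j (by omega) hj
    have := ih j (by omega) hj
    push_cast
    omega

lemma rk_le_col (n : ℕ) (A : Matrix (Fin n) (Fin n) ℤ) (hA : IsASM n A) :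
    ∀ i j, i ≤ n → j ≤ n → rk n A i j ≤ j := by
  intro i j hi hj
  induction j with
  | zero => simp [rk_zero_col]
  | succ j ih =>
    have := rk_col_step n A hA i j (by omega) hi
    have := ih (by omega)
    push_cast
    omega

def reconMat (n : ℕ) (m : ℕ → ℕ → ℤ) : Matrix (Fin n) (Fin n) ℤ :=
  Matrix.of fun p q => m (p.1 + 1) (q.1 + 1) - m p.1 (q.1 + 1) - m (p.1 + 1) q.1 + m p.1 q.1

structure CornerFn (n : ℕ) (m : ℕ → ℕ → ℤ) : Prop where
  zero_row : ∀ j, j ≤ n → m 0 j = 0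
  zero_col : ∀ i, i ≤ n → m i 0 = 0
  row_step : ∀ i j, i < n → j ≤ n → m i j ≤ m (i + 1) j ∧ m (i + 1) j ≤ m i j + 1
  col_step : ∀ i j, i ≤ n → j < n → m i j ≤ m i (j + 1) ∧ m i (j + 1) ≤ m i j + 1
  full_row : ∀ i, i ≤ n → m i n = i
  full_col : ∀ j, j ≤ n → m n j = j

lemma recon_rps (n : ℕ) (m : ℕ → ℕ → ℤ) (hm : CornerFn n m) (p : Fin n) :
    ∀ j, j ≤ n → rps n (reconMat n m) p j = m (p.1 + 1) j - m p.1 j := by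
  intro j
  induction j with
  | zero =>
    intro _
    rw [hm.zero_col _ (by omega), hm.zero_col _ (by omega)]
    simp [rps]
  | succ j ih =>
    intro hj
    have hjn : j < n := by omega
    unfold rps
    rw [sum_lt_succ _ j hjn]
    have := ih (by omega)
    unfold rps at this
    rw [this]
    simp only [reconMat, Matrix.of_apply]
    ring

lemma recon_cps (n : ℕ) (m : ℕ → ℕ → ℤ) (hm : CornerFn n m) (q : Fin n) :
    ∀ i, i ≤ n → cps n (reconMat n m) q i = m i (q.1 + 1) - m i q.1 := by
  intro i
  induction i with
  | zero =>
    intro _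
    rw [hm.zero_row _ (by omega), hm.zero_row _ (by omega)]
    simp [cps]
  | succ i ih =>
    intro hi
    have hin : i < n := by omega
    unfold cps
    rw [sum_lt_succ _ i hin]
    have := ih (by omega)
    unfold cps at this
    rw [this]
    simp only [reconMat, Matrix.of_apply]
    ring

lemma recon_rk (n : ℕ) (m : ℕ → ℕ → ℤ) (hm : CornerFn n m) :
    ∀ i j, i ≤ n → j ≤ n → rk n (reconMat n m) i j = m i j := by
  intro i
  induction i with
  | zero => intro j _ hj; rw [rk_zero_row, hm.zero_row j hj]
  | succ i ih =>
    intro j hi hj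
    have hin : i < n := by omega
    rw [rk_succ_row n _ i j hin, ih j (by omega) hj, recon_rps n m hm ⟨i, hin⟩ j hj]
    ring

lemma recon_isASM (n : ℕ) (m : ℕ → ℕ → ℤ) (hm : CornerFn n m) : IsASM n (reconMat n m) := by
  refine ⟨?_, ?_, ?_, ?_, ?_⟩
  · intro p q
    have h1 := hm.row_step p.1 (q.1 + 1) p.2 (by omega)
    have h2 := hm.row_step p.1 q.1 p.2 (by omega)
    simp only [reconMat, Matrix.of_apply]
    omega
  · intro p j hj
    have := recon_rps n m hm p j hj
    unfold rps at this
    rw [this]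
    have := hm.row_step p.1 j p.2 hj
    omega
  · intro q i hi
    have := recon_cps n m hm q i hi
    unfold cps at this
    rw [this]
    have := hm.col_step i q.1 hi q.2
    omega
  · intro p
    have h : ∑ q : Fin n, reconMat n m p q = rps n (reconMat n m) p n := by
      refine (Finset.sum_congr rfl fun q _ => ?_).symm; simp [rps, q.2]
    rw [h, recon_rps n m hm p n (le_refl n), hm.full_row _ (by omega),
      hm.full_row _ (by exact le_of_lt p.2)]
    push_cast; ring
  · intro q
    have h : ∑ p : Fin n, reconMat n m p q = cps n (reconMat n m) q n := by
      refine (Finset.sum_congr rfl fun p _ => ?_).symm; simp [cps, p.2]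
    rw [h, recon_cps n m hm q n (le_refl n), hm.full_col _ (by omega),
      hm.full_col _ (by exact le_of_lt q.2)]
    push_cast; ring

noncomputable def infRk (n : ℕ) (S : Set (Matrix (Fin n) (Fin n) ℤ)) (i j : ℕ) : ℤ :=
  sInf ((fun F => rk n F i j) '' S)

section Family
variable {n : ℕ} {S : Set (Matrix (Fin n) (Fin n) ℤ)}
  (hne : S.Nonempty) (hASM : ∀ F ∈ S, IsASM n F)

set_option linter.unusedSectionVars false
include hne hASM

lemma infRk_bdd (i j : ℕ) (hi : i ≤ n) (hj : j ≤ n) :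
    BddBelow ((fun F => rk n F i j) '' S) := by
  refine ⟨0, fun x hx => ?_⟩
  obtain ⟨F, hF, rfl⟩ := hx
  exact rk_nonneg n F (hASM F hF) i j hi hj

lemma infRk_attained (i j : ℕ) (hi : i ≤ n) (hj : j ≤ n) :
    ∃ F ∈ S, infRk n S i j = rk n F i j := by
  have h := Int.csInf_mem (hne.image (fun F => rk n F i j)) (infRk_bdd hne hASM i j hi hj)
  obtain ⟨F, hF, hFe⟩ := h
  exact ⟨F, hF, hFe.symm⟩

lemma infRk_le (i j : ℕ) (hi : i ≤ n) (hj : j ≤ n) (F : Matrix (Fin n) (Fin n) ℤ)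
    (hF : F ∈ S) : infRk n S i j ≤ rk n F i j :=
  csInf_le (infRk_bdd hne hASM i j hi hj) (Set.mem_image_of_mem _ hF)

lemma infRk_corner : CornerFn n (infRk n S) := by
  constructor
  · intro j hj
    obtain ⟨F, hF, he⟩ := infRk_attained hne hASM 0 j (by omega) hj
    rw [he, rk_zero_row]
  · intro i hi
    obtain ⟨F, hF, he⟩ := infRk_attained hne hASM i 0 hi (by omega)
    rw [he, rk_zero_col]
  · intro i j hi hj
    constructor
    · obtain ⟨F, hF, he⟩ := infRk_attained hne hASM (i + 1) j (by omega) hj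
      have h1 := infRk_le hne hASM i j (by omega) hj F hF
      have h2 := (rk_row_step n F (hASM F hF) i j hi hj).1
      omega
    · obtain ⟨F, hF, he⟩ := infRk_attained hne hASM i j (by omega) hj
      have h1 := infRk_le hne hASM (i + 1) j (by omega) hj F hF
      have h2 := (rk_row_step n F (hASM F hF) i j hi hj).2
      omega
  · intro i j hi hj
    constructor
    · obtain ⟨F, hF, he⟩ := infRk_attained hne hASM i (j + 1) hi (by omega)
      have h1 := infRk_le hne hASM i j hi (by omega) F hF
      have h2 := (rk_col_step n F (hASM F hF) i j hj hi).1
      omega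
    · obtain ⟨F, hF, he⟩ := infRk_attained hne hASM i j hi (by omega)
      have h1 := infRk_le hne hASM i (j + 1) hi (by omega) F hF
      have h2 := (rk_col_step n F (hASM F hF) i j hj hi).2
      omega
  · intro i hi
    obtain ⟨F, hF, he⟩ := infRk_attained hne hASM i n hi (le_refl n)
    rw [he, rk_row_full n F (hASM F hF) i hi]
  · intro j hj
    obtain ⟨F, hF, he⟩ := infRk_attained hne hASM n j (le_refl n) hj
    rw [he, rk_col_full n F (hASM F hF) j hj]

-- The join matrix of the family S
lemma joinMat_props :
    IsASM n (reconMat n (infRk n S)) ∧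
    (∀ i j, i ≤ n → j ≤ n → rk n (reconMat n (infRk n S)) i j = infRk n S i j) :=
  ⟨recon_isASM n _ (infRk_corner hne hASM), recon_rk n _ (infRk_corner hne hASM)⟩

lemma joinMat_ASMI (hn : 1 ≤ n) (I : Finset ℕ) (hI : I ⊆ Finset.Icc 1 (n - 1))
    (hS : ∀ F ∈ S, InASMI n I F) : InASMI n I (reconMat n (infRk n S)) := by
  obtain ⟨hEasm, hErk⟩ := joinMat_props hne hASM
  refine ⟨hEasm, fun i hiI j hj1 hjn => ?_⟩
  have hicc := Finset.mem_Icc.mp (hI hiI)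
  have hi1 : 1 ≤ i := hicc.1
  have hilt : i < n := by omega
  obtain ⟨F, hF, he⟩ := infRk_attained hne hASM i j (by omega) hjn
  rcases (hS F hF).2 i hiI j hj1 hjn with hc | hc
  · left
    rw [hErk i j (by omega) hjn, hErk (i - 1) j (by omega) hjn]
    have h1 : infRk n S (i - 1) j ≤ rk n F (i - 1) j :=
      infRk_le hne hASM (i - 1) j (by omega) hjn F hF
    have h2 : infRk n S i j ≤ infRk n S (i - 1) j + 1 := by
      have := (infRk_corner hne hASM).row_step (i - 1) j (by omega) hjn
      have hii : i - 1 + 1 = i := by omega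
      rw [hii] at this
      omega
    omega
  · right
    rw [hErk i j (by omega) hjn, hErk (i + 1) j (by omega) hjn]
    have h1 : infRk n S (i + 1) j ≤ rk n F (i + 1) j :=
      infRk_le hne hASM (i + 1) j (by omega) hjn F hF
    have h2 := (infRk_corner hne hASM).row_step i j hilt hjn
    omega

lemma joinMat_ub (F : Matrix (Fin n) (Fin n) ℤ) (hF : F ∈ S) :
    blE n F (reconMat n (infRk n S)) := by
  intro i j _ hi _ hj
  rw [(joinMat_props hne hASM).2 i j hi hj]
  exact infRk_le hne hASM i j hi hj F hF

lemma joinMat_least (D : Matrix (Fin n) (Fin n) ℤ)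
    (hD : ∀ F ∈ S, blE n F D) : blE n (reconMat n (infRk n S)) D := by
  intro i j h1 hi h2 hj
  rw [(joinMat_props hne hASM).2 i j hi hj]
  obtain ⟨F, hF, he⟩ := infRk_attained hne hASM i j hi hj
  rw [he]
  exact hD F hF i j h1 hi h2 hj

end Family

lemma idMat_eq (n : ℕ) : idMat n = reconMat n (fun i j => (min i j : ℤ)) := by
  funext p q
  simp only [idMat, reconMat, Matrix.of_apply]
  have h : (p = q) ↔ (p.1 = q.1) := Fin.ext_iff
  split_ifs with hpq
  · rw [h] at hpq; push_cast; omega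
  · rw [h] at hpq; push_cast; omega

lemma minFn_corner (n : ℕ) : CornerFn n (fun i j => (min i j : ℤ)) := by
  constructor <;> intros <;> push_cast <;> omega

lemma idMat_isASM (n : ℕ) : IsASM n (idMat n) := by
  rw [idMat_eq]; exact recon_isASM n _ (minFn_corner n)

lemma idMat_rk (n : ℕ) (i j : ℕ) (hi : i ≤ n) (hj : j ≤ n) :
    rk n (idMat n) i j = min (i : ℤ) (j : ℤ) := by
  rw [idMat_eq]; exact recon_rk n _ (minFn_corner n) i j hi hj

lemma idMat_ASMI (n : ℕ) (hn : 1 ≤ n) (I : Finset ℕ) (hI : I ⊆ Finset.Icc 1 (n - 1)) :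
    InASMI n I (idMat n) := by
  refine ⟨idMat_isASM n, fun i hiI j hj1 hjn => ?_⟩
  have hicc := Finset.mem_Icc.mp (hI hiI)
  have h1 : 1 ≤ i := hicc.1
  have h2 : i < n := by omega
  rw [idMat_rk n i j (by omega) hjn, idMat_rk n (i - 1) j (by omega) hjn,
    idMat_rk n (i + 1) j (by omega) hjn]
  rcases le_or_gt i j with h | h
  · left; omega
  · right; omega

lemma idMat_bot (n : ℕ) (D : Matrix (Fin n) (Fin n) ℤ) (hD : IsASM n D) :
    blE n (idMat n) D := by
  intro i j h1 hi h2 hj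
  rw [idMat_rk n i j hi hj]
  have ha := rk_le_row n D hD i j hi hj
  have hb := rk_le_col n D hD i j hi hj
  omega


/-- If `A, B ∈ ASM^I(n)` and `C` is their join in `ASM(n)`, then `C ∈ ASM^I(n)` and `C` is
also their join in `ASM^I(n)`.  Consequently `ASM^I(n)` is a lattice: the identity matrix is
its minimum element and pairwise meets exist. -/
theorem stmt1 (n : ℕ) (hn : 1 ≤ n) (I : Finset ℕ) (hI : I ⊆ Finset.Icc 1 (n - 1))
    (A B : Matrix (Fin n) (Fin n) ℤ) (hA : InASMI n I A) (hB : InASMI n I B)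
    (C : Matrix (Fin n) (Fin n) ℤ) (hC : IsASM n C)
    (hub : blE n A C ∧ blE n B C)
    (hleast : ∀ D, IsASM n D → blE n A D → blE n B D → blE n C D) :
    InASMI n I C ∧
    (∀ D, InASMI n I D → blE n A D → blE n B D → blE n C D) ∧
    (InASMI n I (idMat n) ∧ ∀ D, InASMI n I D → blE n (idMat n) D) ∧
    (∀ A' B', InASMI n I A' → InASMI n I B' →
      ∃ E, InASMI n I E ∧ blE n E A' ∧ blE n E B' ∧
        ∀ F, InASMI n I F → blE n F A' → blE n F B' → blE n F E) := by
  refine ⟨?_, ?_, ⟨idMat_ASMI n hn I hI, fun D hD => idMat_bot n D hD.1⟩, ?_⟩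
  · -- C ∈ ASM^I
    set S : Set (Matrix (Fin n) (Fin n) ℤ) := {A, B} with hSdef
    have hne : S.Nonempty := ⟨A, Or.inl rfl⟩
    have hASM : ∀ F ∈ S, IsASM n F := by
      rintro F (rfl | rfl)
      · exact hA.1
      · exact hB.1
    have hS : ∀ F ∈ S, InASMI n I F := by
      rintro F (rfl | rfl)
      · exact hA
      · exact hB
    set E := reconMat n (infRk n S) with hEdef
    have hEasm := (joinMat_props hne hASM).1
    have hErk := (joinMat_props hne hASM).2
    have hEA : blE n A E := joinMat_ub hne hASM A (Or.inl rfl)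
    have hEB : blE n B E := joinMat_ub hne hASM B (Or.inr rfl)
    have hCE : blE n C E := hleast E hEasm hEA hEB
    have hCeq : ∀ i j, 1 ≤ i → i ≤ n → 1 ≤ j → j ≤ n → rk n C i j = rk n E i j := by
      intro i j h1 hi h2 hj
      refine le_antisymm ?_ (hCE i j h1 hi h2 hj)
      obtain ⟨F, hF, he⟩ := infRk_attained hne hASM i j hi hj
      rw [hErk i j hi hj, he]
      rcases hF with rfl | rfl
      · exact hub.1 i j h1 hi h2 hj
      · exact hub.2 i j h1 hi h2 hj
    have hEI := joinMat_ASMI hne hASM hn I hI hS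
    refine ⟨hC, fun i hiI j hj1 hjn => ?_⟩
    have hicc := Finset.mem_Icc.mp (hI hiI)
    have h1 : 1 ≤ i := hicc.1
    have h2 : i < n := by omega
    have key := hEI.2 i hiI j hj1 hjn
    have e0 : rk n C i j = rk n E i j := hCeq i j h1 (by omega) hj1 hjn
    have e2 : rk n C (i + 1) j = rk n E (i + 1) j := hCeq (i + 1) j (by omega) (by omega) hj1 hjn
    have e1 : rk n C (i - 1) j = rk n E (i - 1) j := by
      rcases Nat.eq_or_lt_of_le h1 with h | h
      · rw [← h]; simp [rk_zero_row]
      · exact hCeq (i - 1) j (by omega) (by omega) hj1 hjn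
    rw [e0, e1, e2]
    exact key
  · intro D hD hAD hBD
    exact hleast D hD.1 hAD hBD
  · intro A' B' hA' hB'
    set S : Set (Matrix (Fin n) (Fin n) ℤ) :=
      {F | InASMI n I F ∧ blE n F A' ∧ blE n F B'} with hSdef
    have hidS : idMat n ∈ S :=
      ⟨idMat_ASMI n hn I hI, idMat_bot n A' hA'.1, idMat_bot n B' hB'.1⟩
    have hne : S.Nonempty := ⟨idMat n, hidS⟩
    have hASM : ∀ F ∈ S, IsASM n F := fun F hF => hF.1.1
    have hS : ∀ F ∈ S, InASMI n I F := fun F hF => hF.1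
    refine ⟨reconMat n (infRk n S), joinMat_ASMI hne hASM hn I hI hS, ?_, ?_,
      fun F hF hFA hFB => joinMat_ub hne hASM F ⟨hF, hFA, hFB⟩⟩
    · intro i j h1 hi h2 hj
      rw [(joinMat_props hne hASM).2 i j hi hj]
      obtain ⟨F, hF, he⟩ := infRk_attained hne hASM i j hi hj
      rw [he]
      exact hF.2.1 i j h1 hi h2 hj
    · intro i j h1 hi h2 hj
      rw [(joinMat_props hne hASM).2 i j hi hj]
      obtain ⟨F, hF, he⟩ := infRk_attained hne hASM i j hi hj
      rw [he]
      exact hF.2.2 i j h1 hi h2 hj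
end

section
/- Let n ≥ 1, let I ⊆ [n-1], and write I = ⋃_{t=1}^k {u_t, u_t+1, ..., v_t} as the disjoint union of its maximal integer intervals. Then A ∈ ASM(n) belongs to ASM^I(n) if and only if for every t ∈ [k], every i with u_t ≤ i ≤ v_t, and every j ∈ [n], r_A(i,j) = min{ r_A(v_t+1, j), r_A(u_t-1, j) + (i - u_t + 1) }. -/
lemma rk_eq_sum {n : ℕ} (A : Matrix (Fin n) (Fin n) ℤ) (i j : ℕ) :
    rk n A i j = ∑ p : Fin n, if p.1 < i then (∑ q : Fin n, if q.1 < j then A p q else 0) else 0 := by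
  unfold rk
  refine Finset.sum_congr rfl fun p _ => ?_
  by_cases h : p.1 < i
  · simp [h]
  · simp [h]

lemma sum_if_lt_succ {n : ℕ} (f : Fin n → ℤ) (i : ℕ) (hi : i < n) :
    (∑ p : Fin n, if p.1 < i + 1 then f p else 0)
      = (∑ p : Fin n, if p.1 < i then f p else 0) + f ⟨i, hi⟩ := by
  have key : ∀ p : Fin n, (if p.1 < i + 1 then f p else 0)
      = (if p.1 < i then f p else 0) + (if p = ⟨i, hi⟩ then f p else 0) := by
    intro p
    rcases lt_trichotomy p.1 i with h | h | h
    · have h1 : p ≠ ⟨i, hi⟩ := by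
        intro hc; rw [hc] at h; simp at h
      simp [h, Nat.lt_succ_of_lt h, h1]
    · have h1 : p = ⟨i, hi⟩ := Fin.ext h
      have h2 : ¬ p.1 < i := by omega
      simp [h1, h2]
    · have h1 : ¬ p.1 < i + 1 := by omega
      have h2 : ¬ p.1 < i := by omega
      have h3 : p ≠ ⟨i, hi⟩ := by
        intro hc; rw [hc] at h; simp at h
      simp [h1, h2, h3]
  rw [Finset.sum_congr rfl fun p _ => key p, Finset.sum_add_distrib]
  congr 1
  simp

lemma rk_succ {n : ℕ} (A : Matrix (Fin n) (Fin n) ℤ) (i j : ℕ) (hi : i < n) :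
    rk n A (i + 1) j = rk n A i j + (∑ q : Fin n, if q.1 < j then A (⟨i, hi⟩ : Fin n) q else 0) := by
  rw [rk_eq_sum, rk_eq_sum, sum_if_lt_succ]

lemma rk_mono_succ {n : ℕ} (A : Matrix (Fin n) (Fin n) ℤ) (hA : IsASM n A)
    (i j : ℕ) (hi : i < n) (hj : j ≤ n) :
    rk n A i j ≤ rk n A (i + 1) j ∧ rk n A (i + 1) j ≤ rk n A i j + 1 := by
  rcases hA.2.1 ⟨i, hi⟩ j hj with h | h <;> rw [rk_succ A i j hi, h] <;> omega

lemma rk_mono {n : ℕ} (A : Matrix (Fin n) (Fin n) ℤ) (hA : IsASM n A)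
    (j : ℕ) (hj : j ≤ n) :
    ∀ d i, i + d ≤ n → rk n A i j ≤ rk n A (i + d) j := by
  intro d
  induction d with
  | zero => intro i _; simp
  | succ d ih =>
    intro i h
    have h1 := ih i (by omega)
    have h2 := (rk_mono_succ A hA (i + d) j (by omega) hj).1
    calc rk n A i j ≤ rk n A (i + d) j := h1
      _ ≤ rk n A (i + d + 1) j := h2

lemma rk_le_of_le {n : ℕ} (A : Matrix (Fin n) (Fin n) ℤ) (hA : IsASM n A)
    (j : ℕ) (hj : j ≤ n) (a b : ℕ) (hab : a ≤ b) (hb : b ≤ n) :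
    rk n A a j ≤ rk n A b j := by
  have := rk_mono A hA j hj (b - a) a (by omega)
  have hba : a + (b - a) = b := by omega
  rwa [hba] at this


/-- Writing `I = ⋃_{t<k} {u t, …, v t}` as a disjoint union of maximal integer intervals,
an ASM `A` lies in `ASM^I(n)` iff `r_A(i,j) = min (r_A(v_t+1,j)) (r_A(u_t-1,j) + (i-u_t+1))`
for all `t`, all `u_t ≤ i ≤ v_t` and all `j ∈ [n]`. -/
theorem stmt2 (n : ℕ) (hn : 1 ≤ n) (k : ℕ) (u v : ℕ → ℕ)
    (hu : ∀ t < k, 1 ≤ u t) (huv : ∀ t < k, u t ≤ v t) (hv : ∀ t < k, v t ≤ n - 1)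
    (hsep : ∀ t, t + 1 < k → v t + 1 < u (t + 1))
    (I : Finset ℕ)
    (hI : I = (Finset.range k).biUnion fun t => Finset.Icc (u t) (v t))
    (A : Matrix (Fin n) (Fin n) ℤ) (hA : IsASM n A) :
    InASMI n I A ↔
      ∀ t < k, ∀ i, u t ≤ i → i ≤ v t → ∀ j, 1 ≤ j → j ≤ n →
        rk n A i j =
          min (rk n A (v t + 1) j) (rk n A (u t - 1) j + ((i - u t + 1 : ℕ) : ℤ)) := by
  constructor
  · intro H t ht i h1 h2 j hj1 hjn
    have hun : 1 ≤ u t := hu t ht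
    have hvn : v t ≤ n - 1 := hv t ht
    have hmem : ∀ i', u t ≤ i' → i' ≤ v t → i' ∈ I := by
      intro i' ha hb
      rw [hI]
      exact Finset.mem_biUnion.mpr ⟨t, Finset.mem_range.mpr ht, Finset.mem_Icc.mpr ⟨ha, hb⟩⟩
    have sA : ∀ i', u t ≤ i' → i' ≤ v t →
        rk n A i' j = min (rk n A (i' + 1) j) (rk n A (i' - 1) j + 1) := by
      intro i' ha hb
      have hin : i' < n := by omega
      have m1 : rk n A i' j ≤ rk n A (i' + 1) j := (rk_mono_succ A hA i' j hin hjn).1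
      have m2 : rk n A i' j ≤ rk n A (i' - 1) j + 1 := by
        have h3 := (rk_mono_succ A hA (i' - 1) j (by omega) hjn).2
        have he : i' - 1 + 1 = i' := by omega
        rw [he] at h3
        exact h3
      rcases H.2 i' (hmem i' ha hb) j hj1 hjn with h | h <;> omega
    have sB : ∀ m i', u t ≤ i' → i' ≤ v t → v t - i' = m →
        rk n A i' j = min (rk n A (v t + 1) j) (rk n A (i' - 1) j + 1) := by
      intro m
      induction m with
      | zero =>
        intro i' ha hb hc
        have h3 := sA i' ha hb
        have he : i' + 1 = v t + 1 := by omega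
        rw [he] at h3
        exact h3
      | succ m ih =>
        intro i' ha hb hc
        have h3 := sA i' ha hb
        have h4 := ih (i' + 1) (by omega) (by omega) (by omega)
        have he : i' + 1 - 1 = i' := by omega
        rw [he] at h4
        have h5 : rk n A (i' - 1) j ≤ rk n A i' j :=
          rk_le_of_le A hA j hjn (i' - 1) i' (by omega) (by omega)
        omega
    have sC : ∀ m i', u t ≤ i' → i' ≤ v t → i' - u t = m →
        rk n A i' j = min (rk n A (v t + 1) j)
          (rk n A (u t - 1) j + ((i' - u t + 1 : ℕ) : ℤ)) := by
      intro m
      induction m with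
      | zero =>
        intro i' ha hb hc
        have h3 := sB (v t - i') i' ha hb rfl
        have he1 : i' - 1 = u t - 1 := by omega
        rw [he1] at h3
        have he2 : (i' - u t + 1 : ℕ) = 1 := by omega
        rw [he2]
        omega
      | succ m ih =>
        intro i' ha hb hc
        have h3 := sB (v t - i') i' ha hb rfl
        have h4 := ih (i' - 1) (by omega) (by omega) (by omega)
        have h5 : ((i' - 1 - u t + 1 : ℕ) : ℤ) = ((i' - u t : ℕ) : ℤ) := by omega
        have h6 : ((i' - u t + 1 : ℕ) : ℤ) = ((i' - u t : ℕ) : ℤ) + 1 := by omega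
        rw [h5] at h4
        rw [h6]
        omega
    exact sC (i - u t) i h1 h2 rfl
  · intro H
    refine ⟨hA, ?_⟩
    intro i hiI j hj1 hjn
    rw [hI] at hiI
    obtain ⟨t, htm, him⟩ := Finset.mem_biUnion.mp hiI
    have ht : t < k := Finset.mem_range.mp htm
    obtain ⟨h1, h2⟩ := Finset.mem_Icc.mp him
    have hun : 1 ≤ u t := hu t ht
    have hvn : v t ≤ n - 1 := hv t ht
    have hfi := H t ht i h1 h2 j hj1 hjn
    by_cases hc : rk n A (u t - 1) j + ((i - u t + 1 : ℕ) : ℤ) ≤ rk n A (v t + 1) j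
    · left
      by_cases hiu : i = u t
      · rw [show i - 1 = u t - 1 from by omega]
        omega
      · have h3 := H t ht (i - 1) (by omega) (by omega) j hj1 hjn
        omega
    · right
      by_cases hiv : i = v t
      · rw [show i + 1 = v t + 1 from by omega]
        omega
      · have h3 := H t ht (i + 1) (by omega) (by omega) j hj1 hjn
        omega
end

section
/- Let K be a field, n ≥ 1, and A_1, ..., A_k, A ∈ ASM(n) such that X_{A_1} ∪ ⋯ ∪ X_{A_k} = X_A. Then for each j ∈ [n] there exists t ∈ [k] such that r_A(i,j) = r_{A_t}(i,j) for all i ∈ [n]. -/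
/-- Rank of the top-left `i × j` submatrix of `Z` (for `i, j ≤ n`). -/
noncomputable def tlRank {K : Type*} [Field K] (n : ℕ) (Z : Matrix (Fin n) (Fin n) K)
    (i j : ℕ) : ℕ :=
  (Matrix.of fun (p : Fin i) (q : Fin j) =>
      if h : p.1 < n ∧ q.1 < n then Z ⟨p.1, h.1⟩ ⟨q.1, h.2⟩ else 0).rank

/-- Membership in the ASM variety `X_A`: all top-left ranks of `Z` are bounded by `r_A`. -/
def memX {K : Type*} [Field K] (n : ℕ) (A : Matrix (Fin n) (Fin n) ℤ)
    (Z : Matrix (Fin n) (Fin n) K) : Prop :=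
  ∀ i j, 1 ≤ i → i ≤ n → 1 ≤ j → j ≤ n → (tlRank n Z i j : ℤ) ≤ rk n A i j

section RkLemmas

variable {n : ℕ} (B : Matrix (Fin n) (Fin n) ℤ)

lemma rk_zero_left (j : ℕ) : rk n B 0 j = 0 := by simp [rk]

lemma rk_zero_right (i : ℕ) : rk n B i 0 = 0 := by simp [rk]

lemma rk_rows (i j : ℕ) :
    rk n B i j = ∑ p : Fin n, if p.1 < i then (∑ q : Fin n, if q.1 < j then B p q else 0) else 0 := by
  unfold rk
  refine Finset.sum_congr rfl fun p _ => ?_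
  by_cases h : p.1 < i <;> simp [h]

lemma rk_cols (i j : ℕ) :
    rk n B i j = ∑ q : Fin n, if q.1 < j then (∑ p : Fin n, if p.1 < i then B p q else 0) else 0 := by
  unfold rk
  rw [Finset.sum_comm]
  refine Finset.sum_congr rfl fun q _ => ?_
  by_cases h : q.1 < j <;> simp [h, and_comm]

lemma rk_succ_row_s8 {i : ℕ} (hi : i < n) (j : ℕ) :
    rk n B (i + 1) j = rk n B i j + ∑ q : Fin n, (if q.1 < j then B ⟨i, hi⟩ q else 0) := by
  rw [rk_rows, rk_rows]
  have hterm : ∀ p : Fin n,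
      (if p.1 < i + 1 then (∑ q : Fin n, if q.1 < j then B p q else 0) else 0)
      = (if p.1 < i then (∑ q : Fin n, if q.1 < j then B p q else 0) else 0)
        + (if p = ⟨i, hi⟩ then (∑ q : Fin n, if q.1 < j then B p q else 0) else 0) := by
    intro p
    by_cases h1 : p = ⟨i, hi⟩
    · subst h1; simp
    · have h2 : p.1 ≠ i := fun h => h1 (Fin.ext h)
      have h3 : p.1 < i + 1 ↔ p.1 < i := by omega
      simp [h1, h3]
  rw [Finset.sum_congr rfl (fun p _ => hterm p), Finset.sum_add_distrib,
    Finset.sum_ite_eq' Finset.univ (⟨i, hi⟩ : Fin n)]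
  simp

lemma rk_succ_col_s8 {j : ℕ} (hj : j < n) (i : ℕ) :
    rk n B i (j + 1) = rk n B i j + ∑ p : Fin n, (if p.1 < i then B p ⟨j, hj⟩ else 0) := by
  rw [rk_cols, rk_cols]
  have hterm : ∀ q : Fin n,
      (if q.1 < j + 1 then (∑ p : Fin n, if p.1 < i then B p q else 0) else 0)
      = (if q.1 < j then (∑ p : Fin n, if p.1 < i then B p q else 0) else 0)
        + (if q = ⟨j, hj⟩ then (∑ p : Fin n, if p.1 < i then B p q else 0) else 0) := by
    intro q
    by_cases h1 : q = ⟨j, hj⟩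
    · subst h1; simp
    · have h2 : q.1 ≠ j := fun h => h1 (Fin.ext h)
      have h3 : q.1 < j + 1 ↔ q.1 < j := by omega
      simp [h1, h3]
  rw [Finset.sum_congr rfl (fun q _ => hterm q), Finset.sum_add_distrib,
    Finset.sum_ite_eq' Finset.univ (⟨j, hj⟩ : Fin n)]
  simp

variable {B}

lemma rk_step_row (hB : IsASM n B) {i j : ℕ} (hi : i < n) (hj : j ≤ n) :
    rk n B (i + 1) j = rk n B i j ∨ rk n B (i + 1) j = rk n B i j + 1 := by
  rcases hB.2.1 ⟨i, hi⟩ j hj with h | h <;> rw [rk_succ_row_s8 B hi j, h] <;> simp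

lemma rk_step_col (hB : IsASM n B) {i j : ℕ} (hj : j < n) (hi : i ≤ n) :
    rk n B i (j + 1) = rk n B i j ∨ rk n B i (j + 1) = rk n B i j + 1 := by
  rcases hB.2.2.1 ⟨j, hj⟩ i hi with h | h <;> rw [rk_succ_col_s8 B hj i, h] <;> simp

lemma rk_mono_row (hB : IsASM n B) {j : ℕ} (hj : j ≤ n) :
    ∀ i' : ℕ, i' ≤ n → ∀ i : ℕ, i ≤ i' → rk n B i j ≤ rk n B i' j := by
  intro i'
  induction i' with
  | zero => intro _ i hi; rw [Nat.le_zero.mp hi]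
  | succ m ih =>
      intro hm i hi
      have hstep : rk n B m j ≤ rk n B (m + 1) j := by
        rcases rk_step_row hB (show m < n from hm) hj with h | h <;> omega
      rcases Nat.lt_succ_iff_lt_or_eq.mp (Nat.lt_succ_of_le hi) with h | h
      · exact (ih (by omega) i (by omega)).trans hstep
      · rw [h]

lemma rk_col_bounds (hB : IsASM n B) {i : ℕ} (hi : i ≤ n) :
    ∀ j' : ℕ, j' ≤ n → ∀ j : ℕ, j ≤ j' →
      rk n B i j ≤ rk n B i j' ∧ rk n B i j' ≤ rk n B i j + ((j' - j : ℕ) : ℤ) := by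
  intro j'
  induction j' with
  | zero => intro _ j hj; rw [Nat.le_zero.mp hj]; simp
  | succ m ih =>
      intro hm j hj
      have hstep := rk_step_col hB (show m < n by omega) hi
      rcases Nat.lt_succ_iff_lt_or_eq.mp (Nat.lt_succ_of_le hj) with h | h
      · have hih := ih (by omega) j (by omega)
        have hc1 : ((m + 1 - j : ℕ) : ℤ) = ((m - j : ℕ) : ℤ) + 1 := by omega
        constructor <;> omega
      · rw [h]; simp

lemma rk_nonneg_s8 (hB : IsASM n B) {i j : ℕ} (hi : i ≤ n) (hj : j ≤ n) : 0 ≤ rk n B i j := by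
  have := rk_mono_row hB hj i hi 0 (Nat.zero_le i)
  rwa [rk_zero_left] at this

lemma rk_le_col_s8 (hB : IsASM n B) {i j : ℕ} (hi : i ≤ n) (hj : j ≤ n) : rk n B i j ≤ (j : ℤ) := by
  have := (rk_col_bounds hB hi j hj 0 (Nat.zero_le j)).2
  rw [rk_zero_right] at this
  simpa using this

end RkLemmas

section Count

variable {n : ℕ} {B : Matrix (Fin n) (Fin n) ℤ}

lemma count_jumps (hB : IsASM n B) {j : ℕ} (hj : j ≤ n) (w : ℤ) (hw : 0 ≤ w) :
    ∀ i : ℕ, i ≤ n →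
      (Finset.univ.filter (fun p : Fin n =>
          p.1 < i ∧ rk n B (p.1 + 1) j = rk n B p.1 j + 1 ∧ w < rk n B (p.1 + 1) j)).card
        = (rk n B i j - w).toNat := by
  intro i
  induction i with
  | zero =>
      intro _
      have hempty : (Finset.univ.filter (fun p : Fin n =>
          p.1 < 0 ∧ rk n B (p.1 + 1) j = rk n B p.1 j + 1 ∧ w < rk n B (p.1 + 1) j)) = ∅ := by
        apply Finset.filter_false_of_mem
        intro p _ h
        exact absurd h.1 (Nat.not_lt_zero _)
      rw [hempty, rk_zero_left]
      simp
      omega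
  | succ m ih =>
      intro hm
      have hmn : m < n := hm
      have hrec := ih (by omega)
      have hcard : ∀ i' : ℕ, (Finset.univ.filter (fun p : Fin n =>
          p.1 < i' ∧ rk n B (p.1 + 1) j = rk n B p.1 j + 1 ∧ w < rk n B (p.1 + 1) j)).card
          = ∑ p : Fin n, if (p.1 < i' ∧ rk n B (p.1 + 1) j = rk n B p.1 j + 1
              ∧ w < rk n B (p.1 + 1) j) then 1 else 0 :=
        fun i' => Finset.card_filter _ _
      have hterm : ∀ p : Fin n,
          (if (p.1 < m + 1 ∧ rk n B (p.1 + 1) j = rk n B p.1 j + 1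
              ∧ w < rk n B (p.1 + 1) j) then (1 : ℕ) else 0)
          = (if (p.1 < m ∧ rk n B (p.1 + 1) j = rk n B p.1 j + 1
              ∧ w < rk n B (p.1 + 1) j) then 1 else 0)
            + (if p = ⟨m, hmn⟩ then (if (rk n B (p.1 + 1) j = rk n B p.1 j + 1
                ∧ w < rk n B (p.1 + 1) j) then 1 else 0) else 0) := by
        intro p
        by_cases h1 : p = ⟨m, hmn⟩
        · subst h1
          simp
        · have h2 : p.1 ≠ m := fun h => h1 (Fin.ext h)
          have h3 : p.1 < m + 1 ↔ p.1 < m := by omega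
          simp [h1, h3]
      rw [hcard, Finset.sum_congr rfl (fun p _ => hterm p), Finset.sum_add_distrib,
        Finset.sum_ite_eq' Finset.univ (⟨m, hmn⟩ : Fin n), ← hcard]
      simp only [Finset.mem_univ, if_true]
      have hstep := rk_step_row hB hmn hj
      by_cases hC : rk n B (m + 1) j = rk n B m j + 1 ∧ w < rk n B (m + 1) j
      · rw [if_pos hC]
        omega
      · rw [if_neg hC]
        rcases hstep with h | h
        · omega
        · have : ¬ (w < rk n B (m + 1) j) := fun hlt => hC ⟨h, hlt⟩
          omega

end Count

section RankLemmas

variable {K : Type*} [Field K]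

lemma rank_submatrix_le' {a b c d : ℕ} (M : Matrix (Fin a) (Fin b) K)
    (f : Fin c → Fin a) (g : Fin d → Fin b) :
    (M.submatrix f g).rank ≤ M.rank := by
  have hfac : M.submatrix f g =
      (Matrix.of fun (s : Fin c) (p : Fin a) => if p = f s then (1 : K) else 0) * M *
        (Matrix.of fun (q : Fin b) (t : Fin d) => if q = g t then (1 : K) else 0) := by
    ext s t
    simp [Matrix.mul_apply, ite_mul, mul_ite, one_mul, mul_one, zero_mul, mul_zero,
      Finset.sum_ite_eq', Finset.sum_ite_eq]
  rw [hfac]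
  exact (Matrix.rank_mul_le_left _ _).trans (Matrix.rank_mul_le_right _ _)

lemma rank_partial_perm {a b m : ℕ} (M : Matrix (Fin a) (Fin b) K)
    (e : Fin m → Fin a) (c : Fin m → Fin b)
    (he : Function.Injective e) (hc : Function.Injective c)
    (hM1 : ∀ s q, M (e s) q = if q = c s then 1 else 0)
    (hM0 : ∀ p : Fin a, (∀ s, e s ≠ p) → ∀ q, M p q = 0) :
    M.rank = m := by
  refine le_antisymm ?_ ?_
  · have hfac : M =
        (Matrix.of fun (p : Fin a) (s : Fin m) => if p = e s then (1 : K) else 0) *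
          (Matrix.of fun (s : Fin m) (q : Fin b) => if q = c s then (1 : K) else 0) := by
      ext p q
      rw [Matrix.mul_apply]
      by_cases hp : ∃ s, e s = p
      · obtain ⟨s₀, hs₀⟩ := hp
        rw [Finset.sum_eq_single s₀]
        · rw [← hs₀, hM1]
          simp
        · intro s _ hs
          have hne : p ≠ e s := by
            intro h
            exact hs (he (by rw [hs₀, h]))
          simp [hne]
        · intro h
          exact absurd (Finset.mem_univ s₀) h
      · rw [hM0 p (fun s h => hp ⟨s, h⟩) q]
        refine (Finset.sum_eq_zero fun s _ => ?_).symm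
        have hne : p ≠ e s := fun h => hp ⟨s, h.symm⟩
        simp [hne]
    rw [hfac]
    exact (Matrix.rank_mul_le_right _ _).trans
      ((Matrix.rank_le_card_height _).trans (by simp))
  · have hsub : M.submatrix e c = (1 : Matrix (Fin m) (Fin m) K) := by
      ext s t
      rw [Matrix.submatrix_apply, hM1, Matrix.one_apply]
      by_cases h : s = t
      · subst h
        simp
      · rw [if_neg (fun hh => h (hc hh).symm), if_neg h]
    have hle := rank_submatrix_le' M e c
    rw [hsub, Matrix.rank_one] at hle
    simpa using hle

end RankLemmas

/-- The entry of the witness matrix, as a function of natural indices. -/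
def Zent (K : Type*) [Field K] {n : ℕ} (B : Matrix (Fin n) (Fin n) ℤ) (j a b : ℕ) : K :=
  if rk n B (a + 1) j = rk n B a j + 1 ∧ b = j - (rk n B (a + 1) j).toNat then 1 else 0

/-- The witness matrix for ASM `B` and column `j`. -/
def ZB (K : Type*) [Field K] (n : ℕ) (B : Matrix (Fin n) (Fin n) ℤ) (j : ℕ) :
    Matrix (Fin n) (Fin n) K :=
  Matrix.of fun p q => Zent K B j p.1 q.1

lemma tlRank_ZB {K : Type*} [Field K] {n : ℕ} {B : Matrix (Fin n) (Fin n) ℤ}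
    (hB : IsASM n B) {j i j' : ℕ} (hj1 : 1 ≤ j) (hj : j ≤ n) (hi : i ≤ n) (hj' : j' ≤ n) :
    tlRank n (ZB K n B j) i j' = (rk n B i j - ((j - j' : ℕ) : ℤ)).toNat := by
  classical
  set w : ℤ := ((j - j' : ℕ) : ℤ) with hw
  have hw0 : 0 ≤ w := Int.natCast_nonneg _
  set S : Finset (Fin n) := Finset.univ.filter (fun p : Fin n =>
    p.1 < i ∧ rk n B (p.1 + 1) j = rk n B p.1 j + 1 ∧ w < rk n B (p.1 + 1) j) with hS
  have hcount : S.card = (rk n B i j - w).toNat := count_jumps hB hj w hw0 i hi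
  have hmem : ∀ p : Fin n, p ∈ S ↔
      (p.1 < i ∧ rk n B (p.1 + 1) j = rk n B p.1 j + 1 ∧ w < rk n B (p.1 + 1) j) := by
    intro p
    simp [hS]
  have hv : ∀ p : Fin n, p ∈ S →
      1 ≤ rk n B (p.1 + 1) j ∧ rk n B (p.1 + 1) j ≤ (j : ℤ) := by
    intro p hp
    obtain ⟨h1, h2, h3⟩ := (hmem p).mp hp
    have h0 : 0 ≤ rk n B p.1 j := rk_nonneg_s8 hB (by omega) hj
    exact ⟨by omega, rk_le_col_s8 hB (by omega) hj⟩
  have hinj : ∀ p p' : Fin n, p ∈ S → p' ∈ S →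
      rk n B (p.1 + 1) j = rk n B (p'.1 + 1) j → p = p' := by
    intro p p' hp hp' heq
    by_contra hne
    have hne' : p.1 ≠ p'.1 := fun h => hne (Fin.ext h)
    rcases Nat.lt_or_ge p.1 p'.1 with h | h
    · obtain ⟨h1', h2', h3'⟩ := (hmem p').mp hp'
      have hmono := rk_mono_row hB hj p'.1 (by omega) (p.1 + 1) (by omega)
      omega
    · have hlt : p'.1 < p.1 := by omega
      obtain ⟨h1, h2, h3⟩ := (hmem p).mp hp
      have hmono := rk_mono_row hB hj p.1 (by omega) (p'.1 + 1) (by omega)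
      omega
  -- the top-left submatrix
  set M : Matrix (Fin i) (Fin j') K := Matrix.of fun (p : Fin i) (q : Fin j') =>
    if h : p.1 < n ∧ q.1 < n then ZB K n B j ⟨p.1, h.1⟩ ⟨q.1, h.2⟩ else 0 with hM
  have hMZ : ∀ (p : Fin i) (q : Fin j'), M p q = Zent K B j p.1 q.1 := by
    intro p q
    show (if h : p.1 < n ∧ q.1 < n then ZB K n B j ⟨p.1, h.1⟩ ⟨q.1, h.2⟩ else 0)
      = Zent K B j p.1 q.1
    rw [dif_pos ⟨lt_of_lt_of_le p.2 hi, lt_of_lt_of_le q.2 hj'⟩]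
    rfl
  -- enumeration of S
  set e : Fin S.card → Fin i := fun s =>
    ⟨((S.equivFin.symm s : S) : Fin n).1,
      ((hmem _).mp (S.equivFin.symm s : S).2).1⟩ with he_def
  have hcolbound : ∀ s : Fin S.card,
      j - (rk n B (((S.equivFin.symm s : S) : Fin n).1 + 1) j).toNat < j' := by
    intro s
    have hmem' := (hmem _).mp (S.equivFin.symm s : S).2
    have hb := hv _ (S.equivFin.symm s : S).2
    omega
  set c : Fin S.card → Fin j' := fun s =>
    ⟨j - (rk n B (((S.equivFin.symm s : S) : Fin n).1 + 1) j).toNat, hcolbound s⟩ with hc_def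
  have he : Function.Injective e := by
    intro s s' h
    simp only [he_def, Fin.mk.injEq] at h
    exact S.equivFin.symm.injective (Subtype.ext (Fin.ext h))
  have hc : Function.Injective c := by
    intro s s' h
    have hval : (c s).1 = (c s').1 := congrArg Fin.val h
    simp only [hc_def] at hval
    have hb := hv _ (S.equivFin.symm s : S).2
    have hb' := hv _ (S.equivFin.symm s' : S).2
    have heq : rk n B (((S.equivFin.symm s : S) : Fin n).1 + 1) j
        = rk n B (((S.equivFin.symm s' : S) : Fin n).1 + 1) j := by
      omega
    have := hinj _ _ (S.equivFin.symm s : S).2 (S.equivFin.symm s' : S).2 heq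
    exact S.equivFin.symm.injective (Subtype.ext this)
  have hM1 : ∀ s q, M (e s) q = if q = c s then 1 else 0 := by
    intro s q
    rw [hMZ]
    have hjump := ((hmem _).mp (S.equivFin.symm s : S).2).2.1
    show (if rk n B (((S.equivFin.symm s : S) : Fin n).1 + 1) j
          = rk n B (((S.equivFin.symm s : S) : Fin n).1) j + 1
        ∧ q.1 = j - (rk n B (((S.equivFin.symm s : S) : Fin n).1 + 1) j).toNat
        then (1 : K) else 0) = if q = c s then 1 else 0
    by_cases hq : q.1 = j - (rk n B (((S.equivFin.symm s : S) : Fin n).1 + 1) j).toNat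
    · rw [if_pos ⟨hjump, hq⟩, if_pos (Fin.ext hq)]
    · rw [if_neg (fun h => hq h.2), if_neg (fun h => hq (congrArg Fin.val h))]
  have hM0 : ∀ p : Fin i, (∀ s, e s ≠ p) → ∀ q, M p q = 0 := by
    intro p hp q
    rw [hMZ]
    have hpn : (⟨p.1, lt_of_lt_of_le p.2 hi⟩ : Fin n) ∉ S := by
      intro hmemS
      apply hp (S.equivFin ⟨_, hmemS⟩)
      apply Fin.ext
      show ((S.equivFin.symm (S.equivFin ⟨_, hmemS⟩) : S) : Fin n).1 = p.1
      rw [Equiv.symm_apply_apply]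
    have hnc : ¬ (rk n B (p.1 + 1) j = rk n B p.1 j + 1 ∧ w < rk n B (p.1 + 1) j) := by
      intro hcond
      exact hpn ((hmem _).mpr ⟨p.2, hcond.1, hcond.2⟩)
    show (if rk n B (p.1 + 1) j = rk n B p.1 j + 1
        ∧ q.1 = j - (rk n B (p.1 + 1) j).toNat then (1 : K) else 0) = 0
    rw [if_neg]
    rintro ⟨hj2, hq⟩
    have h1 : 0 ≤ rk n B p.1 j := rk_nonneg_s8 hB (by omega) hj
    have h2 : rk n B (p.1 + 1) j ≤ (j : ℤ) := by
      have : p.1 < n := lt_of_lt_of_le p.2 hi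
      exact rk_le_col_s8 hB (by omega) hj
    have h3 : q.1 < j' := q.2
    exact hnc ⟨hj2, by omega⟩
  have hrank : M.rank = S.card := rank_partial_perm M e c he hc hM1 hM0
  show M.rank = (rk n B i j - w).toNat
  rw [hrank, hcount]

lemma memX_ZB {K : Type*} [Field K] {n : ℕ} {B : Matrix (Fin n) (Fin n) ℤ}
    (hB : IsASM n B) {j : ℕ} (hj1 : 1 ≤ j) (hj : j ≤ n) :
    memX n B (ZB K n B j) := by
  intro i j' hi1 hi hj'1 hj'
  rw [tlRank_ZB hB hj1 hj hi hj']
  rcases le_or_gt j j' with h | h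
  · have h1 := (rk_col_bounds hB hi j' hj' j h).1
    have h0 := rk_nonneg_s8 hB hi hj'
    omega
  · have h1 := (rk_col_bounds hB hi j hj j' (by omega)).2
    have h0 := rk_nonneg_s8 hB hi hj'
    omega

/-- If `X_{A_1} ∪ ⋯ ∪ X_{A_k} = X_A`, then for each column `j ∈ [n]` there is some `t` with
`r_A(i,j) = r_{A_t}(i,j)` for all `i ∈ [n]`. -/
theorem stmt8 (K : Type*) [Field K] (n : ℕ) (hn : 1 ≤ n) (k : ℕ) (hk : 1 ≤ k)
    (As : Fin k → Matrix (Fin n) (Fin n) ℤ) (hAs : ∀ t, IsASM n (As t))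
    (A : Matrix (Fin n) (Fin n) ℤ) (hA : IsASM n A)
    (hunion : ∀ Z : Matrix (Fin n) (Fin n) K, memX n A Z ↔ ∃ t, memX n (As t) Z) :
    ∀ j, 1 ≤ j → j ≤ n → ∃ t, ∀ i, 1 ≤ i → i ≤ n → rk n A i j = rk n (As t) i j := by
  intro j hj1 hjn
  have hZA : memX n A (ZB K n A j) := memX_ZB hA hj1 hjn
  obtain ⟨t, ht⟩ := (hunion _).mp hZA
  refine ⟨t, fun i hi1 hin => ?_⟩
  have hAt : memX n A (ZB K n (As t) j) := (hunion _).mpr ⟨t, memX_ZB (hAs t) hj1 hjn⟩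
  have e1 := ht i j hi1 hin hj1 hjn
  rw [tlRank_ZB hA hj1 hjn hin hjn] at e1
  have e2 := hAt i j hi1 hin hj1 hjn
  rw [tlRank_ZB (hAs t) hj1 hjn hin hjn] at e2
  have h0A := rk_nonneg_s8 hA hin hjn
  have h0t := rk_nonneg_s8 (hAs t) hin hjn
  omega
end
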